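/- arXiv:1905.11770 — 5 statements merged into one kernel-verified Lean document; each statement's English description precedes it below -/
import Mathlib

section
/- Let G be a 3-group containing Z/3 × Z/3 but not containing Z/9 × Z/3, Z/3 × Z/3 × Z/3, or U(3,3) as a subgroup. Then the order of G is at most 81. -/
/-- The group `U(3,3)` of upper unitriangular `3 × 3` matrices over `ℤ/3`,
parametrized by the strictly-upper-triangular entries: the triple `(x, y, z)`
corresponds to the matrix `![![1, x, z], ![0, 1, y], ![0, 0, 1]]`, and the
multiplication below is precisely matrix multiplication in these coordinates. -/
def U33 : Type := ZMod 3 × ZMod 3 × ZMod 3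

instance : DecidableEq U33 := inferInstanceAs (DecidableEq (ZMod 3 × ZMod 3 × ZMod 3))
instance : Fintype U33 := inferInstanceAs (Fintype (ZMod 3 × ZMod 3 × ZMod 3))

instance : Group U33 where
  mul a b := (a.1 + b.1, a.2.1 + b.2.1, a.2.2 + b.2.2 + a.1 * b.2.1)
  one := ((0 : ZMod 3), 0, 0)
  inv a := (-a.1, -a.2.1, -a.2.2 + a.1 * a.2.1)
  mul_assoc a b c := by
    refine Prod.ext ?_ (Prod.ext ?_ ?_)
    · show a.1 + b.1 + c.1 = a.1 + (b.1 + c.1); ring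
    · show a.2.1 + b.2.1 + c.2.1 = a.2.1 + (b.2.1 + c.2.1); ring
    · show a.2.2 + b.2.2 + a.1 * b.2.1 + c.2.2 + (a.1 + b.1) * c.2.1
        = a.2.2 + (b.2.2 + c.2.2 + b.1 * c.2.1) + a.1 * (b.2.1 + c.2.1)
      ring
  one_mul a := by
    refine Prod.ext ?_ (Prod.ext ?_ ?_)
    · show 0 + a.1 = a.1; ring
    · show 0 + a.2.1 = a.2.1; ring
    · show 0 + a.2.2 + 0 * a.2.1 = a.2.2; ring
  mul_one a := by
    refine Prod.ext ?_ (Prod.ext ?_ ?_)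
    · show a.1 + 0 = a.1; ring
    · show a.2.1 + 0 = a.2.1; ring
    · show a.2.2 + 0 + a.1 * 0 = a.2.2; ring
  inv_mul_cancel a := by
    refine Prod.ext ?_ (Prod.ext ?_ ?_)
    · show -a.1 + a.1 = 0; ring
    · show -a.2.1 + a.2.1 = 0; ring
    · show -a.2.2 + a.1 * a.2.1 + a.2.2 + -a.1 * a.2.1 = 0; ring



section Helpers

variable {G : Type} [Group G]

lemma pow_eq_pow_mod' {a : G} {n : ℕ} (h : a ^ n = 1) (m : ℕ) :
    a ^ m = a ^ (m % n) := by
  conv_lhs => rw [← Nat.div_add_mod m n]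
  rw [pow_add, pow_mul, h, one_pow, one_mul]

/-- homomorphism from `Multiplicative (ZMod m)` sending `1` to an element with `a ^ m = 1`. -/
def zmodHom (m : ℕ) [NeZero m] (a : G) (h : a ^ m = 1) :
    Multiplicative (ZMod m) →* G where
  toFun u := a ^ (Multiplicative.toAdd u).val
  map_one' := by
    show a ^ (0 : ZMod m).val = 1
    simp [ZMod.val_zero]
  map_mul' u v := by
    show a ^ ((Multiplicative.toAdd u + Multiplicative.toAdd v).val) = _
    rw [ZMod.val_add, ← pow_eq_pow_mod' h, pow_add]

@[simp] lemma zmodHom_apply (m : ℕ) [NeZero m] (a : G) (h : a ^ m = 1)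
    (u : Multiplicative (ZMod m)) : zmodHom m a h u = a ^ (Multiplicative.toAdd u).val := rfl

lemma exists_subgroup_iso {M : Type} [Group M] (f : M →* G) (hf : Function.Injective f) :
    ∃ H : Subgroup G, Nonempty (H ≃* M) :=
  ⟨f.range, ⟨(MonoidHom.ofInjective hf).symm⟩⟩

lemma toAdd_val_eq_zero {m : ℕ} [NeZero m] {u : Multiplicative (ZMod m)}
    (h : (Multiplicative.toAdd u).val = 0) : u = 1 := by
  have := (ZMod.val_eq_zero _).mp h
  rcases u with u
  exact this

lemma mul_pow_mul' {x y : G} (h : Commute x y) (p q r s : ℕ) :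
    (x ^ p * y ^ q) * (x ^ r * y ^ s) = x ^ (p + r) * y ^ (q + s) := by
  rw [pow_add, pow_add, mul_assoc, ← mul_assoc (y ^ q), ((h.pow_pow r q).symm).eq,
    mul_assoc, ← mul_assoc, ← mul_assoc]

lemma orderOf_eq_nine {a : G} (h9 : a ^ 9 = 1) (h3 : a ^ 3 ≠ 1) : orderOf a = 9 := by
  haveI : Fact (Nat.Prime 3) := ⟨by norm_num⟩
  have h := orderOf_eq_prime_pow (x := a) (p := 3) (n := 1)
    (by norm_num; exact h3) (by norm_num; exact h9)
  simpa using h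

/-- Independent commuting pair of elements of order dividing 3. -/
def Indep3 (e1 e2 : G) : Prop :=
  e1 ^ 3 = 1 ∧ e2 ^ 3 = 1 ∧ Commute e1 e2 ∧
    ∀ i j : ℕ, e1 ^ i * e2 ^ j = 1 → 3 ∣ i ∧ 3 ∣ j

/-- If a ≠ any power of b, with a of order 9, b of order 3, commuting, then G has Z9 × Z3. -/
lemma no_Z9Z3
    (h2 : ¬ ∃ H : Subgroup G,
      Nonempty (H ≃* Multiplicative (ZMod 9) × Multiplicative (ZMod 3)))
    {a b : G} (ha9 : a ^ 9 = 1) (ha3 : a ^ 3 ≠ 1) (hb : b ^ 3 = 1)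
    (hab : Commute a b) (hbn : ∀ i : ℕ, b ≠ a ^ i) : False := by
  apply h2
  refine exists_subgroup_iso
    ((zmodHom 9 a ha9).noncommCoprod (zmodHom 3 b hb)
      (fun m n => by simpa using hab.pow_pow _ _)) ?_
  rw [injective_iff_map_eq_one]
  rintro ⟨u, v⟩ huv
  simp only [MonoidHom.noncommCoprod_apply, zmodHom_apply] at huv
  set i := (Multiplicative.toAdd u).val with hidef
  set j := (Multiplicative.toAdd v).val with hjdef
  have hi : i < 9 := ZMod.val_lt _
  have hj : j < 3 := ZMod.val_lt _
  have hinv : b ^ j = a ^ (9 - i) := by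
    have h1 : a ^ i * a ^ (9 - i) = 1 := by
      rw [← pow_add, show i + (9 - i) = 9 by omega, ha9]
    rw [eq_inv_of_mul_eq_one_right huv]; exact inv_eq_of_mul_eq_one_right h1
  have hb4 : (b ^ 2) ^ 2 = b := by
    rw [← pow_mul, show (2 * 2 : ℕ) = 3 + 1 from rfl, pow_succ, hb, one_mul]
  have hj3 : j = 0 ∨ j = 1 ∨ j = 2 := by omega
  rcases hj3 with hj0 | hj1 | hj2
  · rw [hj0, pow_zero] at hinv
    have hai : a ^ i = 1 := by
      rw [hj0, pow_zero, mul_one] at huv; exact huv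
    have : (9 : ℕ) ∣ i := by
      rw [← orderOf_eq_nine ha9 ha3]; exact orderOf_dvd_of_pow_eq_one hai
    have hu : u = 1 := toAdd_val_eq_zero (by omega)
    have hv : v = 1 := toAdd_val_eq_zero (by rw [← hjdef, hj0])
    rw [hu, hv]; rfl
  · rw [hj1, pow_one] at hinv
    exact absurd hinv (hbn _)
  · rw [hj2] at hinv
    exact absurd (by rw [← hb4, hinv, ← pow_mul]) (hbn ((9 - i) * 2))

end Helpers

section Core
variable {G : Type} [Group G]

lemma span_of_cube_one
    (h3 : ¬ ∃ H : Subgroup G,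
      Nonempty (H ≃* Multiplicative (ZMod 3) × Multiplicative (ZMod 3) ×
        Multiplicative (ZMod 3)))
    {e1 e2 : G} (he : Indep3 e1 e2) {a : G} (ha : a ^ 3 = 1)
    (c1 : Commute a e1) (c2 : Commute a e2) :
    ∃ i j : ℕ, a = e1 ^ i * e2 ^ j := by
  by_contra hcon
  push_neg at hcon
  apply h3
  obtain ⟨he1, he2, he12, hind⟩ := he
  refine exists_subgroup_iso
    ((zmodHom 3 a ha).noncommCoprod
      ((zmodHom 3 e1 he1).noncommCoprod (zmodHom 3 e2 he2)
        (fun m n => by simpa using he12.pow_pow _ _))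
      (fun m n => by
        simp only [MonoidHom.noncommCoprod_apply, zmodHom_apply]
        exact ((c1.pow_pow _ _).mul_right (c2.pow_pow _ _)))) ?_
  rw [injective_iff_map_eq_one]
  rintro ⟨u, v, w⟩ huvw
  simp only [MonoidHom.noncommCoprod_apply, zmodHom_apply] at huvw
  set i := (Multiplicative.toAdd u).val with hidef
  set j := (Multiplicative.toAdd v).val with hjdef
  set k := (Multiplicative.toAdd w).val with hkdef
  have hi : i < 3 := ZMod.val_lt _
  have hj : j < 3 := ZMod.val_lt _
  have hk : k < 3 := ZMod.val_lt _
  have hs : e1 ^ j * e2 ^ k * (e1 ^ (3 - j) * e2 ^ (3 - k)) = 1 := by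
    rw [mul_pow_mul' he12, show j + (3 - j) = 3 by omega, show k + (3 - k) = 3 by omega,
      he1, he2, one_mul]
  have hinv : a ^ i = e1 ^ (3 - j) * e2 ^ (3 - k) := by
    rw [eq_inv_of_mul_eq_one_left huvw]; exact inv_eq_of_mul_eq_one_right hs
  have hi3 : i = 0 ∨ i = 1 ∨ i = 2 := by omega
  rcases hi3 with hi0 | hi1 | hi2
  · rw [hi0, pow_zero, one_mul] at huvw
    obtain ⟨d1, d2⟩ := hind j k huvw
    have hu : u = 1 := toAdd_val_eq_zero (by omega)
    have hv : v = 1 := toAdd_val_eq_zero (by omega)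
    have hw : w = 1 := toAdd_val_eq_zero (by omega)
    rw [hu, hv, hw]; rfl
  · rw [hi1, pow_one] at hinv
    exact absurd hinv (hcon _ _)
  · rw [hi2] at hinv
    have ha4 : (a ^ 2) ^ 2 = a := by
      rw [← pow_mul, show (2 * 2 : ℕ) = 3 + 1 from rfl, pow_succ, ha, one_mul]
    refine absurd ?_ (hcon ((3 - j) + (3 - j)) ((3 - k) + (3 - k)))
    rw [← ha4, hinv, pow_two, mul_pow_mul' he12]

lemma centralizer_span (hG : IsPGroup 3 G)
    (h2 : ¬ ∃ H : Subgroup G,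
      Nonempty (H ≃* Multiplicative (ZMod 9) × Multiplicative (ZMod 3)))
    (h3 : ¬ ∃ H : Subgroup G,
      Nonempty (H ≃* Multiplicative (ZMod 3) × Multiplicative (ZMod 3) ×
        Multiplicative (ZMod 3)))
    {e1 e2 : G} (he : Indep3 e1 e2) {x : G}
    (c1 : Commute x e1) (c2 : Commute x e2) :
    ∃ i j : ℕ, x = e1 ^ i * e2 ^ j := by
  obtain ⟨k, hk⟩ := hG x
  revert x
  suffices h : ∀ n : ℕ, ∀ y : G, Commute y e1 → Commute y e2 → y ^ 3 ^ n = 1 →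
      ∃ i j : ℕ, y = e1 ^ i * e2 ^ j by
    intro x c1 c2 hk; exact h k x c1 c2 hk
  intro n
  induction n with
  | zero => intro y _ _ hy; exact ⟨0, 0, by simpa using hy⟩
  | succ n ih =>
    intro y cy1 cy2 hy
    have hx3 : ∃ i j : ℕ, y ^ 3 = e1 ^ i * e2 ^ j := by
      refine ih (y ^ 3) (cy1.pow_left 3) (cy2.pow_left 3) ?_
      rw [← pow_mul, mul_comm, ← pow_succ]
      exact hy
    by_cases h33 : y ^ 3 = 1
    · exact span_of_cube_one h3 he h33 cy1 cy2
    exfalso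
    obtain ⟨i, j, hij⟩ := hx3
    have hx9 : y ^ 9 = 1 := by
      have h1 : (y ^ 3) ^ 3 = 1 := by
        rw [hij, ((he.2.2.1).pow_pow i j).mul_pow, ← pow_mul, ← pow_mul,
          mul_comm i 3, mul_comm j 3, pow_mul, pow_mul, he.1, he.2.1,
          one_pow, one_pow, one_mul]
      rw [show (9 : ℕ) = 3 * 3 from rfl, pow_mul]; exact h1
    by_cases hb1 : ∀ m : ℕ, e1 ≠ y ^ m
    · exact no_Z9Z3 h2 hx9 h33 he.1 cy1 hb1
    by_cases hb2 : ∀ m : ℕ, e2 ≠ y ^ m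
    · exact no_Z9Z3 h2 hx9 h33 he.2.1 cy2 hb2
    push_neg at hb1 hb2
    obtain ⟨r0, hr0⟩ := hb1
    obtain ⟨q0, hq0⟩ := hb2
    have hox : orderOf y = 9 := orderOf_eq_nine hx9 h33
    have hr' : e1 = y ^ (r0 % 9) := by rw [hr0]; exact pow_eq_pow_mod' hx9 r0
    have hq' : e2 = y ^ (q0 % 9) := by rw [hq0]; exact pow_eq_pow_mod' hx9 q0
    set r := r0 % 9 with hrdef
    set q := q0 % 9 with hqdef
    have hrlt : r < 9 := Nat.mod_lt _ (by norm_num)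
    have hqlt : q < 9 := Nat.mod_lt _ (by norm_num)
    have h3r : (3 : ℕ) ∣ r := by
      have h1 : y ^ (r * 3) = 1 := by rw [pow_mul, ← hr', he.1]
      have h9 : (9 : ℕ) ∣ r * 3 := hox ▸ orderOf_dvd_of_pow_eq_one h1
      omega
    have h3q : (3 : ℕ) ∣ q := by
      have h1 : y ^ (q * 3) = 1 := by rw [pow_mul, ← hq', he.2.1]
      have h9 : (9 : ℕ) ∣ q * 3 := hox ▸ orderOf_dvd_of_pow_eq_one h1
      omega
    have hr9 : r ≠ 0 := by
      intro h0
      rw [h0, pow_zero] at hr'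
      have := (he.2.2.2 1 0 (by simp [hr'])).1
      omega
    have hq9 : q ≠ 0 := by
      intro h0
      rw [h0, pow_zero] at hq'
      have := (he.2.2.2 0 1 (by simp [hq'])).2
      omega
    have key : ∀ ii jj : ℕ, y ^ (r * ii + q * jj) = 1 → (3 ∣ ii ∧ 3 ∣ jj) := by
      intro ii jj h
      refine he.2.2.2 ii jj ?_
      rw [hr', hq', ← pow_mul, ← pow_mul, ← pow_add]; exact h
    have hrc : r = 3 ∨ r = 6 := by omega
    have hqc : q = 3 ∨ q = 6 := by omega
    rcases hrc with h | h <;> rcases hqc with h' | h'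
    · have := (key 1 2 (by rw [h, h', show (3 * 1 + 3 * 2 : ℕ) = 9 from rfl]; exact hx9)).1
      omega
    · have := (key 1 1 (by rw [h, h', show (3 * 1 + 6 * 1 : ℕ) = 9 from rfl]; exact hx9)).1
      omega
    · have := (key 1 1 (by rw [h, h', show (6 * 1 + 3 * 1 : ℕ) = 9 from rfl]; exact hx9)).1
      omega
    · have := (key 1 2 (by
        rw [h, h', show (6 * 1 + 6 * 2 : ℕ) = 9 * 2 from rfl, pow_mul, hx9, one_pow])).1
      omega

end Core

section Setup
variable {G : Type} [Group G]

def g1 : Multiplicative (ZMod 3) × Multiplicative (ZMod 3) := (Multiplicative.ofAdd 1, 1)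
def g2 : Multiplicative (ZMod 3) × Multiplicative (ZMod 3) := (1, Multiplicative.ofAdd 1)

lemma exists_indep3
    (h1 : ∃ H : Subgroup G,
      Nonempty (H ≃* Multiplicative (ZMod 3) × Multiplicative (ZMod 3))) :
    ∃ e1 e2 : G, Indep3 e1 e2 := by
  obtain ⟨E, ⟨ι⟩⟩ := h1
  refine ⟨(ι.symm g1 : E), (ι.symm g2 : E), ?_, ?_, ?_, ?_⟩
  · have h : (ι.symm g1) ^ 3 = 1 := by
      rw [← map_pow, show g1 ^ 3 = 1 by decide, map_one]
    simpa using congrArg (fun x : E => (x : G)) h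
  · have h : (ι.symm g2) ^ 3 = 1 := by
      rw [← map_pow, show g2 ^ 3 = 1 by decide, map_one]
    simpa using congrArg (fun x : E => (x : G)) h
  · have h : Commute (ι.symm g1) (ι.symm g2) := (Commute.all g1 g2).map ι.symm.toMonoidHom
    show ((ι.symm g1 : E) : G) * ((ι.symm g2 : E) : G)
      = ((ι.symm g2 : E) : G) * ((ι.symm g1 : E) : G)
    exact_mod_cast h.eq
  · intro i j hij
    have he1 : ((ι.symm g1 : E) : G) ^ 3 = 1 := by
      have h : (ι.symm g1) ^ 3 = 1 := by rw [← map_pow, show g1 ^ 3 = 1 by decide, map_one]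
      simpa using congrArg (fun x : E => (x : G)) h
    have he2 : ((ι.symm g2 : E) : G) ^ 3 = 1 := by
      have h : (ι.symm g2) ^ 3 = 1 := by rw [← map_pow, show g2 ^ 3 = 1 by decide, map_one]
      simpa using congrArg (fun x : E => (x : G)) h
    rw [pow_eq_pow_mod' he1 i, pow_eq_pow_mod' he2 j] at hij
    have claim : ∀ p q : ℕ, p < 3 → q < 3 →
        ((ι.symm g1 : E) : G) ^ p * ((ι.symm g2 : E) : G) ^ q = 1 → p = 0 ∧ q = 0 := by
      intro p q hp hq hpq
      have hE : (ι.symm g1) ^ p * (ι.symm g2) ^ q = 1 := by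
        have : ((((ι.symm g1) ^ p * (ι.symm g2) ^ q : E)) : G) = 1 := by
          push_cast
          exact hpq
        exact_mod_cast this
      have hm : g1 ^ p * g2 ^ q = 1 := by
        have := congrArg ι hE
        simpa using this
      interval_cases p <;> interval_cases q <;> revert hm <;> decide
    have := claim (i % 3) (j % 3) (Nat.mod_lt _ (by norm_num)) (Nat.mod_lt _ (by norm_num)) hij
    omega

lemma exists_maximal_normal_abelian [Finite G] :
    ∃ A : Subgroup G, A.Normal ∧ (∀ x ∈ A, ∀ y ∈ A, Commute x y) ∧
      ∀ B : Subgroup G, B.Normal → (∀ x ∈ B, ∀ y ∈ B, Commute x y) → A ≤ B → A = B := by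
  haveI : Finite (Subgroup G) :=
    Finite.of_injective (fun H : Subgroup G => (H : Set G)) SetLike.coe_injective
  obtain ⟨A, hA, hmax⟩ := Set.Finite.exists_maximalFor id
    {A : Subgroup G | A.Normal ∧ ∀ x ∈ A, ∀ y ∈ A, Commute x y} (Set.toFinite _)
    ⟨⊥, by constructor; intro n hn g; rw [Subgroup.mem_bot] at *; simp [hn], by
      intro x hx y hy
      rw [Subgroup.mem_bot] at hx
      rw [hx]
      exact Commute.one_left y⟩
  exact ⟨A, hA.1, hA.2, fun B hB1 hB2 hle => le_antisymm hle (hmax ⟨hB1, hB2⟩ hle)⟩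

lemma normal_inter_center {Q : Type} [Group Q] [Finite Q] (hQ : IsPGroup 3 Q)
    (N : Subgroup Q) [hNn : N.Normal] (hN : N ≠ ⊥) :
    ∃ z : Q, z ∈ N ∧ z ∈ Subgroup.center Q ∧ z ≠ 1 := by
  haveI : Fact (Nat.Prime 3) := ⟨by norm_num⟩
  have hconj : IsPGroup 3 (ConjAct Q) := hQ.of_equiv ConjAct.toConjAct
  have hdvd : (3 : ℕ) ∣ Nat.card N := by
    obtain ⟨n, hn⟩ := (IsPGroup.iff_card).mp (hQ.to_subgroup N)
    rcases n with _ | n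
    · exfalso
      apply hN
      rw [← Subgroup.card_eq_one]
      simpa using hn
    · rw [hn]
      exact dvd_pow_self 3 (Nat.succ_ne_zero n)
  have h1fix : (1 : N) ∈ MulAction.fixedPoints (ConjAct Q) N := by
    intro g
    simp
  obtain ⟨b, hbfix, hbne⟩ :=
    hconj.exists_fixed_point_of_prime_dvd_card_of_fixed_point (α := N) hdvd h1fix
  refine ⟨(b : Q), b.2, ?_, ?_⟩
  · rw [Subgroup.mem_center_iff]
    intro g
    have := hbfix (ConjAct.toConjAct g)
    have hval := congrArg (fun x : N => (x : Q)) this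
    simp only [ConjAct.Subgroup.val_conj_smul, ConjAct.smul_def,
      ConjAct.ofConjAct_toConjAct] at hval
    calc g * b = g * b * g⁻¹ * g := by group
    _ = b * g := by rw [hval]
  · intro h
    exact hbne (Subtype.ext (by simpa using h.symm)) |>.elim
end Setup

section Cent
variable {G : Type} [Group G]

lemma centralizer_le_self [Finite G] (hG : IsPGroup 3 G) {A : Subgroup G} (hnorm : A.Normal)
    (hcomm : ∀ x ∈ A, ∀ y ∈ A, Commute x y)
    (hmax : ∀ B : Subgroup G, B.Normal → (∀ x ∈ B, ∀ y ∈ B, Commute x y) → A ≤ B → A = B) :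
    Subgroup.centralizer (A : Set G) ≤ A := by
  haveI := hnorm
  by_contra hc
  rw [SetLike.not_le_iff_exists] at hc
  obtain ⟨x, hxc, hxa⟩ := hc
  set π := QuotientGroup.mk' A with hπ
  have hCnormal : (Subgroup.centralizer (A : Set G)).Normal := by
    constructor
    intro c hcm g
    rw [Subgroup.mem_centralizer_iff] at hcm ⊢
    intro h hh
    have h2 : g⁻¹ * h * g ∈ A := by
      have := hnorm.conj_mem h hh g⁻¹
      simpa using this
    have h3 := hcm _ h2
    calc h * (g * c * g⁻¹) = g * ((g⁻¹ * h * g) * c) * g⁻¹ := by group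
    _ = g * (c * (g⁻¹ * h * g)) * g⁻¹ := by rw [h3]
    _ = g * c * g⁻¹ * h := by group
  set N' : Subgroup (G ⧸ A) := (Subgroup.centralizer (A : Set G)).map π with hN'def
  haveI : N'.Normal := Subgroup.Normal.map hCnormal π (QuotientGroup.mk'_surjective A)
  have hQ : IsPGroup 3 (G ⧸ A) := hG.to_quotient A
  have hN' : N' ≠ ⊥ := by
    intro h
    have hx' : π x ∈ N' := ⟨x, hxc, rfl⟩
    rw [h, Subgroup.mem_bot] at hx'
    exact hxa ((QuotientGroup.eq_one_iff x).mp hx')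
  obtain ⟨zb, hzbN, hzbC, hzb1⟩ := normal_inter_center hQ N' hN'
  obtain ⟨x0, hx0C, hx0π⟩ := hzbN
  have hx0A : x0 ∉ A := by
    intro h
    exact hzb1 (by rw [← hx0π]; exact (QuotientGroup.eq_one_iff x0).mpr h)
  set B := (Subgroup.zpowers zb).comap π with hBdef
  have hzle : Subgroup.zpowers zb ≤ Subgroup.center (G ⧸ A) := Subgroup.zpowers_le.mpr hzbC
  have hznormal : (Subgroup.zpowers zb).Normal := by
    constructor
    intro n hn g
    have hcen := Subgroup.mem_center_iff.mp (hzle hn)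
    have h3 : g * n * g⁻¹ = n := by rw [hcen g]; group
    rw [h3]; exact hn
  have hBnormal : B.Normal := hznormal.comap π
  have hAB : A ≤ B := by
    intro a ha
    show π a ∈ Subgroup.zpowers zb
    have : π a = 1 := (QuotientGroup.eq_one_iff a).mpr ha
    rw [this]
    exact Subgroup.one_mem _
  have hxB : x0 ∈ B := by
    show π x0 ∈ Subgroup.zpowers zb
    rw [hx0π]
    exact Subgroup.mem_zpowers zb
  have hrep : ∀ u ∈ B, ∃ (k : ℤ) (a : G), a ∈ A ∧ u = a * x0 ^ k := by
    intro u hu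
    rw [Subgroup.mem_comap] at hu
    obtain ⟨k, hk⟩ := Subgroup.mem_zpowers_iff.mp hu
    refine ⟨k, u * (x0 ^ k)⁻¹, ?_, by group⟩
    have h5 : π (u * (x0 ^ k)⁻¹) = 1 := by
      rw [map_mul, map_inv, map_zpow, hx0π, hk]
      group
    exact (QuotientGroup.eq_one_iff _).mp h5
  have hBcomm : ∀ u ∈ B, ∀ v ∈ B, Commute u v := by
    intro u hu v hv
    obtain ⟨k, a, ha, hua⟩ := hrep u hu
    obtain ⟨l, b, hb, hvb⟩ := hrep v hv
    rw [hua, hvb]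
    have hax0 : Commute a x0 := Subgroup.mem_centralizer_iff.mp hx0C a ha
    have hbx0 : Commute b x0 := Subgroup.mem_centralizer_iff.mp hx0C b hb
    have c1 : Commute a (b * x0 ^ l) :=
      (hcomm a ha b hb).mul_right (hax0.zpow_right l)
    have c2 : Commute (x0 ^ k) (b * x0 ^ l) :=
      (hbx0.symm.zpow_left k).mul_right ((Commute.refl x0).zpow_zpow k l)
    exact c1.mul_left c2
  have hABeq : A = B := hmax B hBnormal hBcomm hAB
  exact hx0A (hABeq ▸ hxB)

end Cent

section LemmaF
variable {G : Type} [Group G]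

lemma conj_pow_aux (g h : G) (n : ℕ) : (g * h * g⁻¹) ^ n = g * h ^ n * g⁻¹ := by
  induction n with
  | zero => simp
  | succ n ih => rw [pow_succ, pow_succ, ih]; group

lemma order_dvd_cube_sub_one {x : G} {m : ℕ} (hm : m ≠ 0)
    (h : x ^ (m * (m * m)) = x) : orderOf x ∣ m * (m * m) - 1 := by
  have hpos : 0 < m * (m * m) :=
    Nat.mul_pos (Nat.pos_of_ne_zero hm)
      (Nat.mul_pos (Nat.pos_of_ne_zero hm) (Nat.pos_of_ne_zero hm))
  have h1 : x ^ (m * (m * m) - 1) * x = x := by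
    rw [← pow_succ, Nat.sub_add_cancel hpos]
    exact h
  have h2 : x ^ (m * (m * m) - 1) = 1 := mul_right_cancel (h1.trans (one_mul x).symm)
  exact orderOf_dvd_of_pow_eq_one h2

lemma conj_cube_pow {g x : G} {m : ℕ} (hg : g ^ 3 = 1) (h : g * x * g⁻¹ = x ^ m) :
    x ^ (m * (m * m)) = x := by
  have hstep : ∀ n : ℕ, g * x ^ n * g⁻¹ = x ^ (m * n) := by
    intro n
    rw [← conj_pow_aux, h, ← pow_mul]
  have hggg : g * g * g = 1 := by
    have h3 : g ^ 3 = g * g * g := by rw [pow_succ, pow_succ, pow_one]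
    rw [← h3, hg]
  symm
  calc x = (g * g * g) * x * (g * g * g)⁻¹ := by rw [hggg]; group
  _ = g * (g * (g * x * g⁻¹) * g⁻¹) * g⁻¹ := by group
  _ = g * (g * x ^ m * g⁻¹) * g⁻¹ := by rw [h]
  _ = g * x ^ (m * m) * g⁻¹ := by rw [hstep m]
  _ = x ^ (m * (m * m)) := by rw [hstep (m * m)]

lemma cube_root_mod9 {m : ℕ} (hm : m ≠ 0) (h : (9:ℕ) ∣ m * (m * m) - 1) : m % 3 = 1 := by
  have hpos : 0 < m * (m * m) :=
    Nat.mul_pos (Nat.pos_of_ne_zero hm)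
      (Nat.mul_pos (Nat.pos_of_ne_zero hm) (Nat.pos_of_ne_zero hm))
  have hmod : (m * (m * m)) % 9 = 1 := by omega
  have hcast : ((m : ZMod 9)) ^ 3 = 1 := by
    calc ((m : ZMod 9)) ^ 3 = ((m * (m * m) : ℕ) : ZMod 9) := by push_cast; ring
    _ = (((m * (m * m)) % 9 : ℕ) : ZMod 9) := by rw [ZMod.natCast_mod]
    _ = 1 := by rw [hmod]; norm_num
  have hval : ∀ v : ZMod 9, v ^ 3 = 1 → v.val % 3 = 1 := by decide
  have := hval _ hcast
  rw [ZMod.val_natCast] at this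
  omega

lemma cube_root_mod27 {m : ℕ} (hm : m ≠ 0) (h : (27:ℕ) ∣ m * (m * m) - 1) : m % 9 = 1 := by
  have hpos : 0 < m * (m * m) :=
    Nat.mul_pos (Nat.pos_of_ne_zero hm)
      (Nat.mul_pos (Nat.pos_of_ne_zero hm) (Nat.pos_of_ne_zero hm))
  have hmod : (m * (m * m)) % 27 = 1 := by omega
  have hcast : ((m : ZMod 27)) ^ 3 = 1 := by
    calc ((m : ZMod 27)) ^ 3 = ((m * (m * m) : ℕ) : ZMod 27) := by push_cast; ring
    _ = (((m * (m * m)) % 27 : ℕ) : ZMod 27) := by rw [ZMod.natCast_mod]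
    _ = 1 := by rw [hmod]; norm_num
  have hval : ∀ v : ZMod 27, v ^ 3 = 1 → v.val % 9 = 1 := by decide
  have := hval _ hcast
  rw [ZMod.val_natCast] at this
  omega

lemma indep3_of {f1 f2 : G} (hc1 : f1 ^ 3 = 1) (h1n : f1 ≠ 1) (hc2 : f2 ^ 3 = 1)
    (hc : Commute f1 f2) (hnot : ∀ m : ℕ, f2 ≠ f1 ^ m) : Indep3 f1 f2 := by
  refine ⟨hc1, hc2, hc, ?_⟩
  intro i j hij
  rw [pow_eq_pow_mod' hc1 i, pow_eq_pow_mod' hc2 j] at hij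
  have hi : i % 3 < 3 := Nat.mod_lt _ (by norm_num)
  have hj : j % 3 < 3 := Nat.mod_lt _ (by norm_num)
  suffices h : i % 3 = 0 ∧ j % 3 = 0 by omega
  have hinv : f2 ^ (j % 3) = f1 ^ (3 - i % 3) := by
    have hfull : f1 ^ (i % 3) * f1 ^ (3 - i % 3) = 1 := by
      rw [← pow_add, show i % 3 + (3 - i % 3) = 3 by omega, hc1]
    rw [eq_inv_of_mul_eq_one_right hij]
    exact inv_eq_of_mul_eq_one_right hfull
  have hj3 : j % 3 = 0 ∨ j % 3 = 1 ∨ j % 3 = 2 := by omega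
  rcases hj3 with h0 | h0 | h0
  · rw [h0, pow_zero, mul_one] at hij
    have hi3 : i % 3 = 0 ∨ i % 3 = 1 ∨ i % 3 = 2 := by omega
    rcases hi3 with h4 | h4 | h4
    · exact ⟨h4, h0⟩
    · rw [h4, pow_one] at hij; exact absurd hij h1n
    · rw [h4] at hij
      have h14 : (f1 ^ 2) ^ 2 = f1 := by
        rw [← pow_mul, show (2 * 2 : ℕ) = 3 + 1 from rfl, pow_succ, hc1, one_mul]
      exact absurd (by rw [← h14, hij, one_pow] : f1 = 1) h1n
  · rw [h0, pow_one] at hinv; exact absurd hinv (hnot _)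
  · rw [h0] at hinv
    have h24 : (f2 ^ 2) ^ 2 = f2 := by
      rw [← pow_mul, show (2 * 2 : ℕ) = 3 + 1 from rfl, pow_succ, hc2, one_mul]
    exact absurd (by rw [← h24, hinv, ← pow_mul] : f2 = f1 ^ ((3 - i % 3) * 2)) (hnot _)

lemma card_le_of_range {A : Subgroup G} {M : Type} [Group M] [Finite G] [Finite M]
    (f : M →* G) (h : ∀ x ∈ A, x ∈ f.range) : Nat.card A ≤ Nat.card M :=
  le_trans (Subgroup.card_le_of_le (fun x hx => h x hx))
    (Nat.card_le_card_of_surjective f.rangeRestrict f.rangeRestrict_surjective)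

lemma card_le_pow_range [Finite G] {A : Subgroup G} {z : G} {n : ℕ} [NeZero n]
    (hz : z ^ n = 1) (h : ∀ x ∈ A, ∃ m : ℕ, x = z ^ m) : Nat.card A ≤ n := by
  have hle := card_le_of_range (zmodHom n z hz) (fun x hx => by
    obtain ⟨m, hm⟩ := h x hx
    exact ⟨Multiplicative.ofAdd (m : ZMod n), by
      show z ^ (Multiplicative.toAdd (Multiplicative.ofAdd ((m : ℕ) : ZMod n))).val = x
      rw [toAdd_ofAdd, ZMod.val_natCast, ← pow_eq_pow_mod' hz m, hm]⟩)
  calc Nat.card A ≤ Nat.card (Multiplicative (ZMod n)) := hle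
  _ = n := by
    rw [Nat.card_congr (Multiplicative.toAdd (α := ZMod n))]
    exact Nat.card_zmod n

lemma card_le_pair_range [Finite G] {A : Subgroup G} {f1 f2 : G}
    (hf1 : f1 ^ 3 = 1) (hf2 : f2 ^ 3 = 1) (hc : Commute f1 f2)
    (h : ∀ x ∈ A, ∃ i j : ℕ, x = f1 ^ i * f2 ^ j) : Nat.card A ≤ 9 := by
  have hle := card_le_of_range
    ((zmodHom 3 f1 hf1).noncommCoprod (zmodHom 3 f2 hf2)
      (fun m n => by simpa using hc.pow_pow _ _))
    (fun x hx => by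
      obtain ⟨i, j, hij⟩ := h x hx
      refine ⟨(Multiplicative.ofAdd (i : ZMod 3), Multiplicative.ofAdd (j : ZMod 3)), ?_⟩
      show f1 ^ (Multiplicative.toAdd (Multiplicative.ofAdd ((i : ℕ) : ZMod 3))).val *
        f2 ^ (Multiplicative.toAdd (Multiplicative.ofAdd ((j : ℕ) : ZMod 3))).val = x
      rw [toAdd_ofAdd, toAdd_ofAdd, ZMod.val_natCast,
        ZMod.val_natCast, ← pow_eq_pow_mod' hf1 i, ← pow_eq_pow_mod' hf2 j, hij])
  calc Nat.card A ≤ Nat.card (Multiplicative (ZMod 3) × Multiplicative (ZMod 3)) := hle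
  _ = 9 := by
    rw [Nat.card_prod, Nat.card_congr (Multiplicative.toAdd (α := ZMod 3)), Nat.card_zmod]

lemma exists_pow_order3 [Finite G] (hG : IsPGroup 3 G) {x : G} (hx : x ≠ 1) :
    ∃ m : ℕ, (x ^ m) ^ 3 = 1 ∧ x ^ m ≠ 1 := by
  haveI : Fact (Nat.Prime 3) := ⟨by norm_num⟩
  obtain ⟨s, hs⟩ := (IsPGroup.iff_orderOf.mp hG) x
  have hs1 : 1 ≤ s := by
    by_contra h
    push_neg at h
    apply hx
    have h0 : s = 0 := by omega
    rw [h0] at hs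
    exact orderOf_eq_one_iff.mp (by simpa using hs)
  refine ⟨3 ^ (s - 1), ?_, ?_⟩
  · rw [← pow_mul]
    have h1 : 3 ^ (s - 1) * 3 = 3 ^ s := by
      rw [← pow_succ]; congr 1; omega
    rw [h1, ← hs, pow_orderOf_eq_one]
  · apply pow_ne_one_of_lt_orderOf (pow_ne_zero _ (by norm_num))
    rw [hs]
    exact Nat.pow_lt_pow_right (by norm_num) (by omega)

lemma exists_pow_order27 [Finite G] (hG : IsPGroup 3 G) {x : G} (hx : x ^ 9 ≠ 1) :
    ∃ m : ℕ, (x ^ m) ^ 27 = 1 ∧ (x ^ m) ^ 9 ≠ 1 := by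
  haveI : Fact (Nat.Prime 3) := ⟨by norm_num⟩
  obtain ⟨s, hs⟩ := (IsPGroup.iff_orderOf.mp hG) x
  have hs3 : 3 ≤ s := by
    by_contra h
    push_neg at h
    apply hx
    have hdvd : orderOf x ∣ 9 := by
      rw [hs, show (9:ℕ) = 3 ^ 2 from rfl]
      exact pow_dvd_pow 3 (by omega)
    exact orderOf_dvd_iff_pow_eq_one.mp hdvd
  refine ⟨3 ^ (s - 3), ?_, ?_⟩
  · rw [← pow_mul]
    have h1 : 3 ^ (s - 3) * 27 = 3 ^ s := by
      rw [show (27:ℕ) = 3 ^ 3 from rfl, ← pow_add]; congr 1; omega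
    rw [h1, ← hs, pow_orderOf_eq_one]
  · rw [← pow_mul]
    have h1 : 3 ^ (s - 3) * 9 = 3 ^ (s - 1) := by
      rw [show (9:ℕ) = 3 ^ 2 from rfl, ← pow_add]; congr 1; omega
    rw [h1]
    apply pow_ne_one_of_lt_orderOf (pow_ne_zero _ (by norm_num))
    rw [hs]
    exact Nat.pow_lt_pow_right (by norm_num) (by omega)

end LemmaF

section LemmaF2
variable {G : Type} [Group G]

lemma card_A_le_nine [Finite G] (hG : IsPGroup 3 G)
    (h2 : ¬ ∃ H : Subgroup G,
      Nonempty (H ≃* Multiplicative (ZMod 9) × Multiplicative (ZMod 3)))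
    (h3 : ¬ ∃ H : Subgroup G,
      Nonempty (H ≃* Multiplicative (ZMod 3) × Multiplicative (ZMod 3) ×
        Multiplicative (ZMod 3)))
    {e1 e2 : G} (he : Indep3 e1 e2)
    {A : Subgroup G} (hnorm : A.Normal)
    (hcomm : ∀ x ∈ A, ∀ y ∈ A, Commute x y)
    (hcent : Subgroup.centralizer (A : Set G) ≤ A) :
    Nat.card A ≤ 9 := by
  haveI : Fact (Nat.Prime 3) := ⟨by norm_num⟩
  by_cases hpair : ∃ f1 ∈ A, ∃ f2 ∈ A, f1 ^ 3 = 1 ∧ f1 ≠ 1 ∧ f2 ^ 3 = 1 ∧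
      ∀ m : ℕ, f2 ≠ f1 ^ m
  · obtain ⟨f1, hf1A, f2, hf2A, hf13, hf1n, hf23, hfnot⟩ := hpair
    have hind := indep3_of hf13 hf1n hf23 (hcomm f1 hf1A f2 hf2A) hfnot
    refine card_le_pair_range hf13 hf23 (hcomm f1 hf1A f2 hf2A) ?_
    intro x hx
    exact centralizer_span hG h2 h3 hind (hcomm x hx f1 hf1A) (hcomm x hx f2 hf2A)
  · push_neg at hpair
    -- no independent pair in A
    have hne1 : e1 ≠ 1 := by
      intro h
      have := (he.2.2.2 1 0 (by simp [h])).1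
      omega
    haveI : Nontrivial G := ⟨⟨e1, 1, hne1⟩⟩
    haveI := hG.center_nontrivial
    obtain ⟨g0c, hg0c⟩ := exists_ne (1 : Subgroup.center G)
    have hg0ne : (g0c : G) ≠ 1 := by
      intro h
      exact hg0c (by ext; simpa using h)
    obtain ⟨mz, hz3', hzn1'⟩ := exists_pow_order3 hG hg0ne
    obtain ⟨z, hz3, hzn1, hzcen⟩ :
        ∃ z : G, z ^ 3 = 1 ∧ z ≠ 1 ∧ z ∈ Subgroup.center G :=
      ⟨(g0c : G) ^ mz, hz3', hzn1', pow_mem g0c.2 mz⟩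
    have hzA : z ∈ A := hcent (by
      rw [Subgroup.mem_centralizer_iff]
      intro h hh
      exact Subgroup.mem_center_iff.mp hzcen h)
    -- K property
    have hK : ∀ x ∈ A, x ^ 3 = 1 → ∃ m : ℕ, x = z ^ m := by
      intro x hx h3x
      exact hpair z hzA x hx hz3 hzn1 h3x
    -- choose e independent from z
    have hchoice : ∃ e : G, e ^ 3 = 1 ∧ (∀ m : ℕ, e ≠ z ^ m) := by
      by_cases hd1 : ∀ m : ℕ, e1 ≠ z ^ m
      · exact ⟨e1, he.1, hd1⟩
      by_cases hd2 : ∀ m : ℕ, e2 ≠ z ^ m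
      · exact ⟨e2, he.2.1, hd2⟩
      exfalso
      push_neg at hd1 hd2
      obtain ⟨r0, hr0⟩ := hd1
      obtain ⟨q0, hq0⟩ := hd2
      have hr' : e1 = z ^ (r0 % 3) := by rw [hr0]; exact pow_eq_pow_mod' hz3 r0
      have hq' : e2 = z ^ (q0 % 3) := by rw [hq0]; exact pow_eq_pow_mod' hz3 q0
      set r := r0 % 3 with hrdef
      set q := q0 % 3 with hqdef
      have hrlt : r < 3 := Nat.mod_lt _ (by norm_num)
      have hqlt : q < 3 := Nat.mod_lt _ (by norm_num)
      have hrn : r ≠ 0 := fun h => hne1 (by rw [hr', h, pow_zero])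
      have hqn : q ≠ 0 := by
        intro h
        have he2n : e2 ≠ 1 := by
          intro hh
          have := (he.2.2.2 0 1 (by simp [hh])).2
          omega
        exact he2n (by rw [hq', h, pow_zero])
      have key : ∀ ii jj : ℕ, 3 ∣ (r * ii + q * jj) → (3 ∣ ii ∧ 3 ∣ jj) := by
        intro ii jj hdvd
        refine he.2.2.2 ii jj ?_
        rw [hr', hq', ← pow_mul, ← pow_mul, ← pow_add]
        obtain ⟨w, hw⟩ := hdvd
        rw [hw, pow_mul, hz3, one_pow]
      have hrc : r = 1 ∨ r = 2 := by omega
      have hqc : q = 1 ∨ q = 2 := by omega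
      rcases hrc with h | h <;> rcases hqc with h' | h'
      · have := (key 1 2 (by omega)).1; omega
      · have := (key 1 1 (by omega)).1; omega
      · have := (key 1 1 (by omega)).1; omega
      · have := (key 1 2 (by omega)).1; omega
    obtain ⟨e, he3, henz⟩ := hchoice
    -- the "all order-9 elements are powers of b" lemma
    have hpowb : ∀ b, b ∈ A → b ^ 9 = 1 → b ^ 3 ≠ 1 →
        ∀ x ∈ A, x ^ 9 = 1 → ∃ m : ℕ, x = b ^ m := by
      intro b hbA hb9 hb3 x hxA hx9
      have hzb : ∃ t : ℕ, z = b ^ t ∧ 3 ∣ t := by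
        obtain ⟨s, hsz⟩ := hK (b ^ 3) (pow_mem hbA 3) (by rw [← pow_mul]; exact hb9)
        have hs3 : s % 3 = 1 ∨ s % 3 = 2 := by
          by_contra hs0
          push_neg at hs0
          have h0 : s % 3 = 0 := by omega
          apply hb3
          rw [hsz, pow_eq_pow_mod' hz3 s, h0, pow_zero]
        rcases hs3 with h | h
        · refine ⟨3, ?_, by norm_num⟩
          rw [hsz, pow_eq_pow_mod' hz3 s, h, pow_one]
        · refine ⟨6, ?_, by norm_num⟩
          rw [show (6:ℕ) = 3 * 2 from rfl, pow_mul, hsz, ← pow_mul,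
            pow_eq_pow_mod' hz3 (s * 2), show s * 2 % 3 = 1 by omega, pow_one]
      obtain ⟨t, hzbt, h3t⟩ := hzb
      by_cases hx3 : x ^ 3 = 1
      · obtain ⟨m, hm⟩ := hK x hxA hx3
        exact ⟨t * m, by rw [hm, hzbt, pow_mul]⟩
      · obtain ⟨s, hsx⟩ := hK (x ^ 3) (pow_mem hxA 3) (by rw [← pow_mul]; exact hx9)
        have hxb : x ^ 3 = b ^ (t * s) := by rw [hsx, hzbt, pow_mul]
        set u := (t * s) % 9 with hudef
        have hxbu : x ^ 3 = b ^ u := by rw [hxb]; exact pow_eq_pow_mod' hb9 (t * s)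
        have hts : (3:ℕ) ∣ t * s := by
          obtain ⟨w, hw⟩ := h3t
          exact ⟨w * s, by rw [hw]; ring⟩
        have h3u : 3 ∣ u ∧ u < 9 := by
          obtain ⟨w, hw⟩ := hts
          constructor
          · omega
          · omega
        obtain ⟨w, hw, hwlt⟩ : ∃ w, u = 3 * w ∧ w < 3 := ⟨u / 3, by omega, by omega⟩
        have hcxb : Commute x (b ^ (9 - w)) := (hcomm x hxA b hbA).pow_right _
        set y := x * b ^ (9 - w) with hydef
        have hy3 : y ^ 3 = 1 := by
          rw [hydef, hcxb.mul_pow, ← pow_mul, hxbu, ← pow_add]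
          rw [show u + (9 - w) * 3 = 27 by omega]
          rw [show (27:ℕ) = 9 * 3 from rfl, pow_mul, hb9, one_pow]
        have hyA : y ∈ A := mul_mem hxA (pow_mem hbA _)
        obtain ⟨n, hn⟩ := hK y hyA hy3
        refine ⟨t * n + w, ?_⟩
        have hinv : (b ^ (9 - w))⁻¹ = b ^ w := by
          apply inv_eq_of_mul_eq_one_right
          rw [← pow_add, show 9 - w + w = 9 by omega, hb9]
        calc x = y * (b ^ (9 - w))⁻¹ := by rw [hydef]; group
        _ = z ^ n * b ^ w := by rw [hn, hinv]
        _ = b ^ (t * n) * b ^ w := by rw [hzbt, ← pow_mul]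
        _ = b ^ (t * n + w) := by rw [← pow_add]
    -- step (i): every element of A satisfies x^9 = 1
    have hA9 : ∀ x ∈ A, x ^ 9 = 1 := by
      by_contra hcon
      push_neg at hcon
      obtain ⟨x, hxA, hx9⟩ := hcon
      obtain ⟨mm, ha27, ha9⟩ := exists_pow_order27 hG hx9
      set a := x ^ mm with hadef
      have haA : a ∈ A := pow_mem hxA mm
      have horda : orderOf a = 27 := by
        have h := orderOf_eq_prime_pow (x := a) (p := 3) (n := 2)
          (by norm_num; exact ha9) (by norm_num; exact ha27)
        simpa using h
      set b := a ^ 3 with hbdef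
      have hbA : b ∈ A := pow_mem haA 3
      have hb9 : b ^ 9 = 1 := by rw [hbdef, ← pow_mul]; exact ha27
      have hb3 : b ^ 3 ≠ 1 := by rw [hbdef, ← pow_mul]; exact ha9
      have hordb : orderOf b = 9 := orderOf_eq_nine hb9 hb3
      have hpows := hpowb b hbA hb9 hb3
      -- conjugation of b by e
      have hebeA : e * b * e⁻¹ ∈ A := hnorm.conj_mem b hbA e
      have hebe9 : (e * b * e⁻¹) ^ 9 = 1 := by
        rw [conj_pow_aux, hb9, mul_one, mul_inv_cancel]
      obtain ⟨m0, hm0⟩ := hpows _ hebeA hebe9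
      set m := m0 % 9 with hmdef
      have hm : e * b * e⁻¹ = b ^ m := by rw [hm0]; exact pow_eq_pow_mod' hb9 m0
      have hmn0 : m ≠ 0 := by
        intro h
        rw [h, pow_zero] at hm
        apply hb3
        have hb1 : b = 1 := by
          have := congrArg (fun w => e⁻¹ * w * e) hm
          simpa [mul_assoc] using this
        rw [hb1, one_pow]
      have hm3 : m % 3 = 1 :=
        cube_root_mod9 hmn0 (hordb ▸ order_dvd_cube_sub_one hmn0 (conj_cube_pow he3 hm))
      -- conjugation of a by e
      have hcA : e * a * e⁻¹ ∈ A := hnorm.conj_mem a haA e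
      set d := (e * a * e⁻¹) * a⁻¹ with hddef
      have hdA : d ∈ A := mul_mem hcA (inv_mem haA)
      have hca : Commute (e * a * e⁻¹) a := hcomm _ hcA a haA
      have hd3 : d ^ 3 = b ^ m * b⁻¹ := by
        have h1 : d ^ 3 = (e * a * e⁻¹) ^ 3 * (a⁻¹) ^ 3 := hca.inv_right.mul_pow 3
        rw [h1, conj_pow_aux, ← hbdef, hm, inv_pow, ← hbdef]
      have hd9 : d ^ 9 = 1 := by
        rw [show (9:ℕ) = 3 * 3 from rfl, pow_mul, hd3]
        have hbm : b ^ m * b⁻¹ = b ^ (m - 1) := by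
          have h1 : b ^ (m - 1) * b = b ^ m := by
            rw [← pow_succ, Nat.sub_add_cancel (by omega)]
          rw [← h1]; group
        rw [hbm, ← pow_mul]
        rw [pow_eq_pow_mod' hb9 ((m - 1) * 3), show (m - 1) * 3 % 9 = 0 by omega, pow_zero]
      obtain ⟨n0, hn0⟩ := hpows d hdA hd9
      have hc_eq : e * a * e⁻¹ = a ^ ((3 * n0 + 1) % 27) := by
        have h1 : e * a * e⁻¹ = d * a := by rw [hddef]; group
        rw [h1, hn0, hbdef, ← pow_mul, show 3 * n0 = n0 * 3 by ring]
        rw [show a ^ (n0 * 3) * a = a ^ (n0 * 3 + 1) from (pow_succ a (n0 * 3)).symm]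
        rw [show n0 * 3 + 1 = 3 * n0 + 1 by ring]
        exact pow_eq_pow_mod' ha27 (3 * n0 + 1)
      set u := (3 * n0 + 1) % 27 with hudef
      have hun0 : u ≠ 0 := by omega
      have hu9 : u % 9 = 1 :=
        cube_root_mod27 hun0 (horda ▸ order_dvd_cube_sub_one hun0 (conj_cube_pow he3 hc_eq))
      -- e commutes with b
      have hebe_b : e * b * e⁻¹ = b := by
        have h1 : e * b * e⁻¹ = a ^ (u * 3) := by
          rw [hbdef, ← conj_pow_aux, hc_eq, ← pow_mul]
        rw [h1, pow_eq_pow_mod' ha27 (u * 3), show u * 3 % 27 = 3 by omega, hbdef]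
      have hcomm_eb : Commute b e := by
        have h1 := congrArg (fun w => w * e) hebe_b
        simp only [inv_mul_cancel_right] at h1
        exact (h1.symm : b * e = e * b)
      have henb : ∀ i : ℕ, e ≠ b ^ i := by
        intro i hei
        have h1 : b ^ (i * 3) = 1 := by rw [pow_mul, ← hei, he3]
        have h9 : (9:ℕ) ∣ i * 3 := hordb ▸ orderOf_dvd_of_pow_eq_one h1
        obtain ⟨w, hw⟩ : (3:ℕ) ∣ i := by omega
        obtain ⟨s2, hs2⟩ := hK (b ^ 3) (pow_mem hbA 3) (by rw [← pow_mul]; exact hb9)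
        apply henz (s2 * w)
        rw [hei, hw, pow_mul, hs2, ← pow_mul]
      exact no_Z9Z3 h2 hb9 hb3 he3 hcomm_eb henb
    -- step (ii)/(iii)
    by_cases hb : ∃ b ∈ A, b ^ 3 ≠ 1
    · obtain ⟨b, hbA, hb3⟩ := hb
      exact card_le_pow_range (n := 9) (hA9 b hbA)
        (fun x hx => hpowb b hbA (hA9 b hbA) hb3 x hx (hA9 x hx))
    · push_neg at hb
      calc Nat.card A ≤ 3 :=
        card_le_pow_range (n := 3) hz3 (fun x hx => hK x hx (hb x hx))
      _ ≤ 9 := by norm_num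

end LemmaF2

section Final
variable {G : Type} [Group G]

def autPermHom (A : Subgroup G) : MulAut A →* Equiv.Perm {x : A // x ≠ 1} where
  toFun σ := Equiv.subtypeEquiv σ.toEquiv (fun a => by
    constructor
    · intro ha hσ
      exact ha (σ.injective (hσ.trans (map_one σ).symm))
    · intro hσ ha
      exact hσ (by rw [show σ.toEquiv a = σ a from rfl, ha, map_one]))
  map_one' := by
    ext x
    rfl
  map_mul' σ τ := by
    ext x
    rfl

theorem main_bound (G : Type) [Group G] [Finite G] (hG : IsPGroup 3 G)
    (h1 : ∃ H : Subgroup G,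
      Nonempty (H ≃* Multiplicative (ZMod 3) × Multiplicative (ZMod 3)))
    (h2 : ¬ ∃ H : Subgroup G,
      Nonempty (H ≃* Multiplicative (ZMod 9) × Multiplicative (ZMod 3)))
    (h3 : ¬ ∃ H : Subgroup G,
      Nonempty (H ≃* Multiplicative (ZMod 3) × Multiplicative (ZMod 3) ×
        Multiplicative (ZMod 3))) :
    Nat.card G ≤ 81 := by
  haveI : Fact (Nat.Prime 3) := ⟨by norm_num⟩
  classical
  obtain ⟨e1, e2, he⟩ := exists_indep3 h1
  obtain ⟨A, hnorm, hcomm, hmax⟩ := exists_maximal_normal_abelian (G := G)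
  haveI := hnorm
  have hcent := centralizer_le_self hG hnorm hcomm hmax
  have hA9 : Nat.card A ≤ 9 := card_A_le_nine hG h2 h3 he hnorm hcomm hcent
  set f := (autPermHom A).comp (MulAut.conjNormal (H := A)) with hfdef
  have hker : f.ker = A := by
    ext g
    constructor
    · intro hg
      apply hcent
      rw [Subgroup.mem_centralizer_iff]
      intro h hh
      by_cases hone : h = 1
      · rw [hone, one_mul, mul_one]
      · have hx : (⟨h, hh⟩ : A) ≠ 1 := fun hc => hone (congrArg Subtype.val hc)
        have h2' := Equiv.ext_iff.mp (MonoidHom.mem_ker.mp hg) ⟨⟨h, hh⟩, hx⟩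
        have h3' : g * h * g⁻¹ = h := by
          have := congrArg (fun y : {x : A // x ≠ 1} => ((y.1 : G))) h2'
          simpa [hfdef, autPermHom, MulAut.conjNormal_apply] using this
        have h4 : g * h = h * g := by
          have := congrArg (fun w => w * g) h3'
          simpa [inv_mul_cancel_right] using this
        exact h4.symm
    · intro hg
      rw [MonoidHom.mem_ker]
      ext x
      show ((((f g) x : {x : A // x ≠ 1}) : A) : G)
        = ((((1 : Equiv.Perm {x : A // x ≠ 1}) x : {x : A // x ≠ 1}) : A) : G)
      simp only [Equiv.Perm.one_apply]
      have hcgx : Commute g ((x : A) : G) := hcomm g hg _ (x.1).2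
      simp only [hfdef, autPermHom, MonoidHom.comp_apply, MonoidHom.coe_mk, OneHom.coe_mk,
        Equiv.subtypeEquiv_apply]
      show (MulAut.conjNormal g (x : A) : G) = ((x : A) : G)
      rw [MulAut.conjNormal_apply]
      rw [hcgx.eq, mul_inv_cancel_right]
  have hcards : Nat.card G = Nat.card (G ⧸ A) * Nat.card A :=
    Subgroup.card_eq_card_quotient_mul_card_subgroup A
  have hQiso : Nat.card (G ⧸ A) = Nat.card f.range := by
    conv_lhs => rw [← hker]
    exact Nat.card_congr (QuotientGroup.quotientKerEquivRange f).toEquiv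
  have hrangeP : IsPGroup 3 f.range :=
    (hG.to_quotient f.ker).of_equiv (QuotientGroup.quotientKerEquivRange f)
  obtain ⟨j, hj⟩ := IsPGroup.iff_card.mp hrangeP
  haveI : Fintype A := Fintype.ofFinite A
  have hdvd : Nat.card f.range ∣ Nat.card (Equiv.Perm {x : A // x ≠ 1}) :=
    Subgroup.card_subgroup_dvd_card _
  have hSlt : Fintype.card {x : A // x ≠ 1} < Fintype.card A :=
    Fintype.card_lt_of_injective_of_notMem (fun x => (x : A)) Subtype.coe_injective
      (b := 1) (by rintro ⟨⟨y, hy⟩, h⟩; exact hy h)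
  have hcardA : Fintype.card A ≤ 9 := by
    rw [← Nat.card_eq_fintype_card]; exact hA9
  have hcardPerm : Nat.card (Equiv.Perm {x : A // x ≠ 1})
      = Nat.factorial (Fintype.card {x : A // x ≠ 1}) := by
    rw [Nat.card_eq_fintype_card, Fintype.card_perm]
  have hdvd8 : Nat.card f.range ∣ Nat.factorial 8 := by
    refine dvd_trans hdvd ?_
    rw [hcardPerm]
    exact Nat.factorial_dvd_factorial (by omega)
  have hjle : Nat.card f.range ≤ 9 := by
    rw [hj]
    have hj2 : j ≤ 2 := by
      by_contra hc
      push_neg at hc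
      have h27 : (27:ℕ) ∣ 3 ^ j := by
        rw [show (27:ℕ) = 3 ^ 3 from rfl]
        exact pow_dvd_pow 3 (by omega)
      have : (27:ℕ) ∣ Nat.factorial 8 := dvd_trans h27 (hj ▸ hdvd8)
      norm_num [Nat.factorial] at this
    calc (3:ℕ) ^ j ≤ 3 ^ 2 := Nat.pow_le_pow_right (by norm_num) hj2
    _ = 9 := by norm_num
  calc Nat.card G = Nat.card (G ⧸ A) * Nat.card A := hcards
  _ = Nat.card f.range * Nat.card A := by rw [hQiso]
  _ ≤ 9 * 9 := Nat.mul_le_mul hjle hA9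
  _ = 81 := by norm_num

end Final

theorem three_group_with_Z3xZ3_but_no_larger_rank_has_order_at_most_81
    (G : Type) [Group G] [Finite G] (hG : IsPGroup 3 G)
    (h1 : ∃ H : Subgroup G,
      Nonempty (H ≃* Multiplicative (ZMod 3) × Multiplicative (ZMod 3)))
    (h2 : ¬ ∃ H : Subgroup G,
      Nonempty (H ≃* Multiplicative (ZMod 9) × Multiplicative (ZMod 3)))
    (h3 : ¬ ∃ H : Subgroup G,
      Nonempty (H ≃* Multiplicative (ZMod 3) × Multiplicative (ZMod 3) ×
        Multiplicative (ZMod 3)))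
    (h4 : ¬ ∃ H : Subgroup G, Nonempty (H ≃* U33)) :
    Nat.card G ≤ 81 := by
  exact main_bound G hG h1 h2 h3
end

section
/- Let G be the group with presentation ⟨A, B : A^m = B^n = 1, B A B^{-1} = A^r⟩, where gcd((r-1)n, m) = 1 and r^n ≡ 1 (mod m). Let d be the multiplicative order of r modulo m. Then the subgroup H generated by A and B^d is a normal cyclic subgroup of G of index d. -/
/-!
Conjugation by `B` acts on `A` as `x ↦ x ^ r`, so `B ^ d` commutes with `A`; as the orders of `A`
and `B ^ d` divide the coprime numbers `m` and `n`, `H = ⟨A, B ^ d⟩` is generated by `A * B ^ d`.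
Since `r` is a unit mod `m`, conjugation by `B` maps `H` onto `⟨A ^ r, B ^ d⟩ = H`, so `H` is
normal. The quotient by `H` is generated by the image of `B`, whose `d`-th power is trivial, so
the index divides `d`; conversely `A ↦ 0`, `B ↦ 1` defines a surjection onto `ℤ/d` (as `d ∣ n`)
that kills `H`.
-/

open Subgroup

theorem Int.isCoprime_of_pow_modEq_one {r : ℤ} {m n : ℕ} (hn : n ≠ 0)
    (h : r ^ n ≡ 1 [ZMOD m]) : IsCoprime r m := by
  have hr : (r : ZMod m) ^ n = 1 := by exact_mod_cast (ZMod.intCast_eq_intCast_iff _ _ _).2 h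
  exact ((ZMod.coe_int_isUnit_iff_isCoprime r m).1 ((isUnit_pow_iff hn).1 (hr ▸ isUnit_one))).symm

section Group

variable {G : Type*} [Group G] {a b : G} {r : ℤ}

theorem conj_pow_eq_zpow_pow (hab : b * a * b⁻¹ = a ^ r) (k : ℕ) :
    b ^ k * a * (b ^ k)⁻¹ = a ^ r ^ k := by
  induction k with
  | zero => simp
  | succ k ih => calc
      b ^ (k + 1) * a * (b ^ (k + 1))⁻¹ = b * (b ^ k * a * (b ^ k)⁻¹) * b⁻¹ := by group
      _ = (b * a * b⁻¹) ^ r ^ k := by rw [ih, conj_zpow]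
      _ = a ^ r ^ (k + 1) := by rw [hab, ← zpow_mul, pow_succ']

theorem commute_pow_of_zpow_pow_eq_self (hab : b * a * b⁻¹ = a ^ r) {k : ℕ}
    (hk : a ^ r ^ k = a) : Commute a (b ^ k) :=
  (mul_inv_eq_iff_eq_mul.1 ((conj_pow_eq_zpow_pow hab k).trans hk)).symm

theorem zpow_eq_zpow_of_intCast_eq {m : ℕ} (ha : a ^ m = 1) {s t : ℤ}
    (hst : (s : ZMod m) = t) : a ^ s = a ^ t :=
  zpow_eq_zpow_iff_modEq.2 <| ((ZMod.intCast_eq_intCast_iff _ _ _).1 hst).of_dvd <|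
    Int.natCast_dvd_natCast.2 (orderOf_dvd_of_pow_eq_one ha)

theorem Commute.mem_zpowers_mul_left (h : Commute a b)
    (hab : (orderOf a).Coprime (orderOf b)) : a ∈ zpowers (a * b) := by
  have hpow : (a * b) ^ orderOf b = a ^ orderOf b := by
    rw [h.mul_pow, pow_orderOf_eq_one, mul_one]
  exact zpowers_le.2 (hpow ▸ pow_mem (mem_zpowers _) _) (mem_zpowers_pow_iff.2 hab.symm)

theorem Commute.closure_pair_eq_zpowers_mul (h : Commute a b)
    (hab : (orderOf a).Coprime (orderOf b)) : closure {a, b} = zpowers (a * b) := by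
  refine le_antisymm ((closure_le _).2 (Set.pair_subset (h.mem_zpowers_mul_left hab) ?_))
    (zpowers_le.2 (mul_mem (subset_closure (by simp)) (subset_closure (by simp))))
  simpa only [h.eq, SetLike.mem_coe] using h.symm.mem_zpowers_mul_left hab.symm

theorem closure_pair_zpow_left (hr : IsCoprime r (orderOf a)) (c : G) :
    closure {a ^ r, c} = closure {a, c} := by
  have ha : a ∈ zpowers (a ^ r) := mem_zpowers_zpow_iff.2 (Int.isCoprime_iff_gcd_eq_one.1 hr)
  exact le_antisymm
    ((closure_le _).2 (Set.pair_subset (zpow_mem (subset_closure (by simp)) r)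
      (subset_closure (by simp))))
    ((closure_le _).2 (Set.pair_subset (zpowers_le.2 (subset_closure (by simp)) ha)
      (subset_closure (by simp))))

theorem normal_closure_pair_pow (hG : closure {a, b} = ⊤) (hab : b * a * b⁻¹ = a ^ r)
    (hr : IsCoprime r (orderOf a)) (k : ℕ) : (closure {a, b ^ k}).Normal := by
  rw [← normalizer_eq_top_iff, eq_top_iff, ← hG, closure_le, Set.pair_subset_iff]
  refine ⟨le_normalizer (subset_closure (by simp)), ?_⟩
  rw [SetLike.mem_coe, mem_normalizer_iff_map_conj_eq, MonoidHom.map_closure, Set.image_pair]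
  simp only [MonoidHom.coe_coe, MulAut.conj_apply, hab, (Commute.self_pow b k).eq,
    mul_inv_cancel_right]
  exact closure_pair_zpow_left hr _

theorem index_dvd_of_closure_pair_eq_top (hG : closure {a, b} = ⊤) {N : Subgroup G} [N.Normal]
    (ha : a ∈ N) {k : ℕ} (hb : b ^ k ∈ N) : N.index ∣ k := by
  let π := QuotientGroup.mk' N
  have hgen : ∀ x : G ⧸ N, x ∈ zpowers (π b) := by
    have hle : closure {a, b} ≤ (zpowers (π b)).comap π :=
      (closure_le _).2 (Set.pair_subset (by simp [π, (QuotientGroup.eq_one_iff a).2 ha])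
        (mem_zpowers (π b)))
    intro x
    obtain ⟨g, rfl⟩ := QuotientGroup.mk'_surjective N x
    exact hle (hG ▸ mem_top g)
  rw [index_eq_card, ← orderOf_eq_card_of_forall_mem_zpowers hgen]
  exact orderOf_dvd_of_pow_eq_one (by rw [← map_pow]; exact (QuotientGroup.eq_one_iff _).2 hb)

theorem card_dvd_index_of_le_ker {G' : Type*} [Group G'] {f : G →* G'}
    (hf : Function.Surjective f) {H : Subgroup G} (hH : H ≤ f.ker) : Nat.card G' ∣ H.index := by
  have := index_dvd_of_le hH
  rwa [← MonoidHom.comap_bot, index_comap_of_surjective _ hf, index_bot] at this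

end Group

def metacyclicRels (m n : ℕ) (r : ℤ) : Set (FreeGroup (Fin 2)) :=
  {.of 0 ^ m, .of 1 ^ n, .of 1 * .of 0 * (.of 1)⁻¹ * (.of 0 ^ r)⁻¹}

namespace metacyclicRels

variable {m n : ℕ} {r : ℤ}

local notation "M" => PresentedGroup (metacyclicRels m n r)

theorem of_zero_pow : (.of 0 : M) ^ m = 1 := by
  have := PresentedGroup.one_of_mem (rels := metacyclicRels m n r) (x := .of 0 ^ m)
    (by simp [metacyclicRels])
  rwa [map_pow] at this

theorem of_one_pow : (.of 1 : M) ^ n = 1 := by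
  have := PresentedGroup.one_of_mem (rels := metacyclicRels m n r) (x := .of 1 ^ n)
    (by simp [metacyclicRels])
  rwa [map_pow] at this

theorem of_one_conj : (.of 1 : M) * .of 0 * (.of 1)⁻¹ = .of 0 ^ r := by
  have := PresentedGroup.one_of_mem (rels := metacyclicRels m n r)
    (x := .of 1 * .of 0 * (.of 1)⁻¹ * (.of 0 ^ r)⁻¹) (by simp [metacyclicRels])
  rwa [map_mul, map_mul, map_inv, map_inv, map_zpow, mul_inv_eq_one] at this

theorem closure_of_pair_eq_top : Subgroup.closure ({.of 0, .of 1} : Set M) = ⊤ := by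
  rw [← PresentedGroup.closure_range_of]
  congr 1
  ext x
  simp [Fin.exists_fin_two, eq_comm]

theorem lift_eq_one_of_mem {k : ℕ} (hk : k ∣ n) :
    ∀ w ∈ metacyclicRels m n r,
      FreeGroup.lift ![(1 : Multiplicative (ZMod k)), .ofAdd 1] w = 1 := by
  simp only [metacyclicRels, Set.mem_insert_iff, Set.mem_singleton_iff]
  rintro w (rfl | rfl | rfl)
  · simp
  · simp [← ofAdd_nsmul, (ZMod.natCast_eq_zero_iff n k).2 hk]
  · simp

def toZMod {k : ℕ} (hk : k ∣ n) : M →* Multiplicative (ZMod k) :=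
  PresentedGroup.toGroup (lift_eq_one_of_mem hk)

theorem toZMod_of_zero {k : ℕ} (hk : k ∣ n) : toZMod hk (.of 0 : M) = 1 :=
  PresentedGroup.toGroup.of _

theorem toZMod_of_one {k : ℕ} (hk : k ∣ n) : toZMod hk (.of 1 : M) = .ofAdd 1 :=
  PresentedGroup.toGroup.of _

theorem toZMod_surjective {k : ℕ} (hk : k ∣ n) : Function.Surjective (toZMod hk : M →* _) := by
  intro y
  obtain ⟨z, hz⟩ := ZMod.intCast_surjective (Multiplicative.toAdd y)
  exact ⟨.of 1 ^ z, by rw [map_zpow, toZMod_of_one, ← ofAdd_zsmul, zsmul_one, hz, ofAdd_toAdd]⟩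

theorem closure_le_ker_toZMod {k : ℕ} (hk : k ∣ n) :
    Subgroup.closure {.of 0, .of 1 ^ k} ≤ (toZMod hk : M →* _).ker := by
  rw [closure_le]
  refine Set.pair_subset (toZMod_of_zero hk) ?_
  rw [SetLike.mem_coe, MonoidHom.mem_ker, map_pow, toZMod_of_one, ← ofAdd_nsmul, nsmul_one,
    ZMod.natCast_self, ofAdd_zero]

theorem dvd_index_closure_of_zero_of_one_pow {k : ℕ} (hk : k ∣ n) :
    k ∣ (Subgroup.closure {.of 0, .of 1 ^ k} : Subgroup M).index := by
  have := card_dvd_index_of_le_ker (toZMod_surjective (m := m) (r := r) hk)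
    (closure_le_ker_toZMod hk)
  rwa [Nat.card_congr Multiplicative.toAdd, Nat.card_zmod] at this

end metacyclicRels

open metacyclicRels in
theorem burnside_presentation_normal_cyclic_subgroup_of_index_d_general
    (m n : ℕ) (hn : 0 < n) (r : ℤ)
    (hgcd : Int.gcd ((r - 1) * n) m = 1) (hrn : r ^ n ≡ 1 [ZMOD (m : ℤ)])
    (rels : Set (FreeGroup (Fin 2)))
    (hrels : rels = {FreeGroup.of 0 ^ m, FreeGroup.of 1 ^ n,
      FreeGroup.of 1 * FreeGroup.of 0 * (FreeGroup.of 1)⁻¹ * (FreeGroup.of 0 ^ r)⁻¹})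
    (A B : PresentedGroup rels) (hA : A = PresentedGroup.of 0)
    (hB : B = PresentedGroup.of 1)
    (d : ℕ) (hd : d = orderOf ((r : ZMod m)))
    (H : Subgroup (PresentedGroup rels)) (hH : H = Subgroup.closure {A, B ^ d}) :
    H.Normal ∧ IsCyclic H ∧ H.index = d := by
  obtain rfl : rels = metacyclicRels m n r := hrels
  have hAm : A ^ m = 1 := hA ▸ of_zero_pow
  have hBn : B ^ n = 1 := hB ▸ of_one_pow
  have hBA : B * A * B⁻¹ = A ^ r := hA ▸ hB ▸ of_one_conj
  have hG : Subgroup.closure {A, B} = ⊤ := hA ▸ hB ▸ closure_of_pair_eq_top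
  subst hH
  have hrn' : (r : ZMod m) ^ n = 1 := by
    exact_mod_cast (ZMod.intCast_eq_intCast_iff _ _ _).2 hrn
  have hdn : d ∣ n := hd ▸ orderOf_dvd_of_pow_eq_one hrn'
  have hr : IsCoprime r (orderOf A) :=
    (Int.isCoprime_of_pow_modEq_one hn.ne' hrn).of_isCoprime_of_dvd_right
      (Int.natCast_dvd_natCast.2 (orderOf_dvd_of_pow_eq_one hAm))
  have hcomm : Commute A (B ^ d) := by
    refine commute_pow_of_zpow_pow_eq_self hBA
      ((zpow_eq_zpow_of_intCast_eq hAm ?_).trans (zpow_one A))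
    push_cast
    exact hd ▸ pow_orderOf_eq_one _
  have hcop : (orderOf A).Coprime (orderOf (B ^ d)) := by
    have hmn : m.Coprime n := Nat.isCoprime_iff_coprime.1
      (Int.isCoprime_iff_gcd_eq_one.2 hgcd).of_mul_left_right.symm
    exact (hmn.coprime_dvd_left (orderOf_dvd_of_pow_eq_one hAm)).coprime_dvd_right
      ((orderOf_pow_dvd d).trans (orderOf_dvd_of_pow_eq_one hBn))
  have hnormal := normal_closure_pair_pow hG hBA hr d
  refine ⟨hnormal, ?_, dvd_antisymm ?_ (hA ▸ hB ▸ dvd_index_closure_of_zero_of_one_pow hdn)⟩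
  · rw [hcomm.closure_pair_eq_zpowers_mul hcop]
    infer_instance
  · exact index_dvd_of_closure_pair_eq_top hG (subset_closure (by simp)) (subset_closure (by simp))

theorem burnside_presentation_normal_cyclic_subgroup_of_index_d
    (m n : ℕ) (hm : 0 < m) (hn : 0 < n) (r : ℤ)
    (hgcd : Int.gcd ((r - 1) * n) m = 1) (hrn : r ^ n ≡ 1 [ZMOD (m : ℤ)])
    (rels : Set (FreeGroup (Fin 2)))
    (hrels : rels = {FreeGroup.of 0 ^ m, FreeGroup.of 1 ^ n,
      FreeGroup.of 1 * FreeGroup.of 0 * (FreeGroup.of 1)⁻¹ * (FreeGroup.of 0 ^ r)⁻¹})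
    (A B : PresentedGroup rels) (hA : A = PresentedGroup.of 0)
    (hB : B = PresentedGroup.of 1)
    (d : ℕ) (hd : d = orderOf ((r : ZMod m)))
    (H : Subgroup (PresentedGroup rels)) (hH : H = Subgroup.closure {A, B ^ d}) :
    H.Normal ∧ IsCyclic H ∧ H.index = d :=
  burnside_presentation_normal_cyclic_subgroup_of_index_d_general m n hn r hgcd hrn rels hrels A B
    hA hB d hd H hH
end

section
/- Let G = ⟨A, B : A^m = B^n = 1, B A B^{-1} = A^r⟩ where gcd((r-1)n, m) = 1 and r^n ≡ 1 (mod m), and let d be the multiplicative order of r modulo m. Then the normal cyclic subgroup H = ⟨A, B^d⟩ is not strictly contained in any cyclic subgroup of G. -/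
theorem burnside_presentation_cyclic_subgroup_is_maximal_cyclic
    (m n : ℕ) (hm : 0 < m) (hn : 0 < n) (r : ℤ)
    (hgcd : Int.gcd ((r - 1) * n) m = 1) (hrn : r ^ n ≡ 1 [ZMOD (m : ℤ)])
    (rels : Set (FreeGroup (Fin 2)))
    (hrels : rels = {FreeGroup.of 0 ^ m, FreeGroup.of 1 ^ n,
      FreeGroup.of 1 * FreeGroup.of 0 * (FreeGroup.of 1)⁻¹ * (FreeGroup.of 0 ^ r)⁻¹})
    (A B : PresentedGroup rels) (hA : A = PresentedGroup.of 0)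
    (hB : B = PresentedGroup.of 1)
    (d : ℕ) (hd : d = orderOf ((r : ZMod m)))
    (H : Subgroup (PresentedGroup rels)) (hH : H = Subgroup.closure {A, B ^ d}) :
    ¬ ∃ C : Subgroup (PresentedGroup rels), IsCyclic C ∧ H < C := by
  subst hA hB hd hH
  haveI : NeZero m := ⟨hm.ne'⟩
  set A : PresentedGroup rels := PresentedGroup.of 0 with hA
  set B : PresentedGroup rels := PresentedGroup.of 1 with hB
  obtain ⟨n', rfl⟩ : ∃ n', n = n' + 1 := ⟨n - 1, by omega⟩
  set n : ℕ := n' + 1 with hn'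
  -- relators are trivial in the presented group
  have hrel : ∀ w ∈ rels, PresentedGroup.mk rels w = 1 := fun w hw =>
    (QuotientGroup.eq_one_iff w).mpr (Subgroup.subset_normalClosure hw)
  have hAm : A ^ m = 1 := by
    have := hrel _ (by rw [hrels]; exact Or.inl rfl)
    rw [map_pow] at this; exact this
  have hBn : B ^ n = 1 := by
    have := hrel _ (by rw [hrels]; exact Or.inr (Or.inl rfl))
    rw [map_pow] at this; exact this
  have hBAB : B * A * B⁻¹ = A ^ (r : ℤ) := by
    have := hrel _ (by rw [hrels]; exact Or.inr (Or.inr rfl))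
    rw [map_mul, map_mul, map_mul, map_inv, map_inv, map_zpow] at this
    exact mul_inv_eq_one.mp this
  -- the homomorphism to Perm (ZMod m)
  have hru : ((r : ZMod m)) ^ n = 1 := by
    have h1 : ((r ^ n : ℤ) : ZMod m) = ((1 : ℤ) : ZMod m) :=
      (ZMod.intCast_eq_intCast_iff _ _ _).mpr hrn
    push_cast at h1
    exact h1
  set τ : Equiv.Perm (ZMod m) := Equiv.addLeft (1 : ZMod m) with hτ
  have hσli : Function.LeftInverse (fun x : ZMod m => (r : ZMod m) ^ n' * x)
      (fun x : ZMod m => (r : ZMod m) * x) := by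
    intro x
    simp only []
    rw [← mul_assoc, ← pow_succ, hru, one_mul]
  have hσri : Function.RightInverse (fun x : ZMod m => (r : ZMod m) ^ n' * x)
      (fun x : ZMod m => (r : ZMod m) * x) := by
    intro x
    simp only []
    rw [← mul_assoc, mul_comm ((r:ZMod m)) _, ← pow_succ, hru, one_mul]
  set σ : Equiv.Perm (ZMod m) :=
    ⟨fun x => (r : ZMod m) * x, fun x => (r : ZMod m) ^ n' * x, hσli, hσri⟩ with hσ
  have hτn : ∀ (k : ℕ) (x : ZMod m), (τ ^ k) x = x + k := by
    intro k
    induction k with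
    | zero => intro x; simp
    | succ k ih =>
      intro x
      rw [pow_succ', Equiv.Perm.mul_apply]
      have ht : ∀ y : ZMod m, τ y = 1 + y := fun y => rfl
      rw [ht, ih]
      push_cast
      ring
  have hτz : ∀ (k : ℤ) (x : ZMod m), (τ ^ k) x = x + k := by
    intro k x
    cases k with
    | ofNat k => rw [Int.ofNat_eq_coe, zpow_natCast, hτn]; push_cast; ring
    | negSucc k =>
      rw [zpow_negSucc]
      have h1 : (τ ^ (k + 1)) (x + ((Int.negSucc k : ℤ) : ZMod m)) = x := by
        rw [hτn]
        have : ((Int.negSucc k : ℤ) : ZMod m) = -((k : ZMod m) + 1) := by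
          rw [Int.negSucc_eq]; push_cast; ring
        rw [this]; push_cast; ring
      conv_lhs => rw [← h1]
      rw [Equiv.Perm.inv_def, Equiv.symm_apply_apply]
  have hσn : ∀ (k : ℕ) (x : ZMod m), (σ ^ k) x = (r : ZMod m) ^ k * x := by
    intro k
    induction k with
    | zero => intro x; simp
    | succ k ih =>
      intro x
      rw [pow_succ', Equiv.Perm.mul_apply]
      have hs : ∀ y : ZMod m, σ y = (r : ZMod m) * y := fun y => rfl
      rw [hs, ih, ← mul_assoc, mul_comm ((r:ZMod m)) _, pow_succ]
  set f : Fin 2 → Equiv.Perm (ZMod m) := ![τ, σ] with hf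
  have hfrel : ∀ w ∈ rels, FreeGroup.lift f w = 1 := by
    intro w hw
    rw [hrels] at hw
    rcases hw with rfl | rfl | rfl
    · rw [map_pow, FreeGroup.lift_apply_of]
      ext x
      show (f 0 ^ m) x = x
      have : f 0 = τ := rfl
      rw [this, hτn]
      simp
    · rw [map_pow, FreeGroup.lift_apply_of]
      ext x
      show (f 1 ^ n) x = x
      have : f 1 = σ := rfl
      rw [this, hσn, hru, one_mul]
    · rw [map_mul, map_mul, map_mul, map_inv, map_inv, map_zpow,
        FreeGroup.lift_apply_of, FreeGroup.lift_apply_of]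
      have h0 : f 0 = τ := rfl
      have h1 : f 1 = σ := rfl
      rw [h0, h1, mul_inv_eq_one]
      ext x
      rw [Equiv.Perm.mul_apply, Equiv.Perm.mul_apply, hτz]
      have hστ : τ (σ⁻¹ x) = 1 + σ⁻¹ x := rfl
      rw [hστ]
      have : σ (1 + σ⁻¹ x) = (r : ZMod m) * (1 + σ⁻¹ x) := rfl
      rw [this, mul_add, mul_one]
      have h2 : (r : ZMod m) * (σ⁻¹ x) = x := σ.apply_symm_apply x
      rw [h2, add_comm]
  set φ : PresentedGroup rels →* Equiv.Perm (ZMod m) := PresentedGroup.toGroup hfrel with hφ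
  have hφA : φ A = τ := PresentedGroup.toGroup.of hfrel
  have hφAk : ∀ k : ℤ, A ^ k = 1 → (m : ℤ) ∣ k := by
    intro k hk
    have h1 : φ (A ^ k) = 1 := by rw [hk, map_one]
    rw [map_zpow, hφA] at h1
    have h2 : (τ ^ k) 0 = (0 : ZMod m) := by rw [h1]; rfl
    rw [hτz, zero_add] at h2
    exact (ZMod.intCast_zmod_eq_zero_iff_dvd k m).mp h2
  -- structure of the group
  have hAcongr : ∀ k k' : ℤ, (m : ℤ) ∣ (k - k') → A ^ k = A ^ k' := by
    intro k k' ⟨t, ht⟩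
    have : k = k' + (m : ℤ) * t := by linarith
    rw [this, zpow_add, zpow_mul, zpow_natCast, hAm, one_zpow, mul_one]
  have hconj : ∀ (j : ℕ) (k : ℤ), B ^ j * A ^ k * (B ^ j)⁻¹ = A ^ (k * r ^ j) := by
    intro j
    induction j with
    | zero => intro k; simp
    | succ j ih =>
      intro k
      rw [pow_succ' B, mul_inv_rev]
      have : B * B ^ j * A ^ k * ((B ^ j)⁻¹ * B⁻¹) =
          B * (B ^ j * A ^ k * (B ^ j)⁻¹) * B⁻¹ := by group
      rw [this, ih, ← conj_zpow, hBAB, ← zpow_mul]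
      ring_nf
  have hswap : ∀ (j : ℕ) (k : ℤ), B ^ j * A ^ k = A ^ (k * r ^ j) * B ^ j := by
    intro j k
    have := hconj j k
    rwa [mul_inv_eq_iff_eq_mul] at this
  have hmulform : ∀ (i k : ℤ) (j l : ℕ),
      (A ^ i * B ^ j) * (A ^ k * B ^ l) = A ^ (i + k * r ^ j) * B ^ (j + l) := by
    intro i k j l
    calc (A ^ i * B ^ j) * (A ^ k * B ^ l)
        = A ^ i * (B ^ j * A ^ k) * B ^ l := by group
      _ = A ^ i * (A ^ (k * r ^ j) * B ^ j) * B ^ l := by rw [hswap]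
      _ = A ^ (i + k * r ^ j) * B ^ (j + l) := by rw [zpow_add, pow_add]; group
  set S : Subgroup (PresentedGroup rels) :=
    { carrier := {g | ∃ (i : ℤ) (j : ℕ), g = A ^ i * B ^ j}
      one_mem' := ⟨0, 0, by simp⟩
      mul_mem' := by
        rintro a b ⟨i, j, rfl⟩ ⟨k, l, rfl⟩
        exact ⟨i + k * r ^ j, j + l, hmulform i k j l⟩
      inv_mem' := by
        rintro a ⟨i, j, rfl⟩
        refine ⟨-i * r ^ (n' * j), n' * j, ?_⟩
        apply inv_eq_of_mul_eq_one_right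
        rw [hmulform]
        have hj : j + n' * j = n * j := by rw [hn']; ring
        have hexp : A ^ (i + -i * r ^ (n' * j) * r ^ j) = 1 := by
          have h1 : i + -i * r ^ (n' * j) * r ^ j = i * (1 - r ^ (n * j)) := by
            rw [hn']; ring
          have h2 : (m : ℤ) ∣ (1 - r ^ (n * j)) := by
            have hd1 : (m : ℤ) ∣ r ^ n - 1 := by
              have := (ZMod.intCast_zmod_eq_zero_iff_dvd (r ^ n - 1) m).mpr
              apply (ZMod.intCast_zmod_eq_zero_iff_dvd (r ^ n - 1) m).mp
              push_cast
              rw [hru]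
              ring
            have hd2 : r ^ n - 1 ∣ r ^ (n * j) - 1 := by
              have := sub_dvd_pow_sub_pow (r ^ n) 1 j
              simpa [pow_mul] using this
            obtain ⟨c, hc⟩ := hd1.trans hd2
            exact ⟨-c, by linarith⟩
          rw [h1]
          have : (m : ℤ) ∣ i * (1 - r ^ (n * j)) - 0 := by
            rw [sub_zero]; exact Dvd.dvd.mul_left h2 i
          rw [hAcongr _ 0 this, zpow_zero]
        rw [hexp, one_mul, hj, pow_mul, hBn, one_pow] } with hS
  have htop : ∀ g : PresentedGroup rels, ∃ (i : ℤ) (j : ℕ), g = A ^ i * B ^ j := by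
    intro g
    refine PresentedGroup.generated_by rels S ?_ g
    intro x
    fin_cases x
    · exact ⟨1, 0, by simp; rfl⟩
    · exact ⟨0, 1, by simp; rfl⟩
  -- main argument
  rintro ⟨C, hC, hHC⟩
  have hA_H : A ∈ Subgroup.closure {A, B ^ orderOf ((r : ZMod m))} :=
    Subgroup.subset_closure (Or.inl rfl)
  have hBd_H : B ^ orderOf ((r : ZMod m)) ∈ Subgroup.closure {A, B ^ orderOf ((r : ZMod m))} :=
    Subgroup.subset_closure (Or.inr rfl)
  have hA_C : A ∈ C := hHC.le hA_H
  refine hHC.not_ge ?_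
  intro g hg
  obtain ⟨i, j, rfl⟩ := htop g
  -- g commutes with A since C is cyclic hence abelian
  have hcomm : (A ^ i * B ^ j) * A = A * (A ^ i * B ^ j) := by
    letI : CommGroup C := IsCyclic.commGroup
    have := mul_comm (⟨_, hg⟩ : C) (⟨A, hA_C⟩ : C)
    have h2 := congrArg Subtype.val this
    simpa using h2
  have hBjA : B ^ j * A = A * B ^ j := by
    have h1 : A ^ i * (B ^ j * A) = A ^ i * (A * B ^ j) := by
      calc A ^ i * (B ^ j * A) = (A ^ i * B ^ j) * A := by rw [mul_assoc]
        _ = A * (A ^ i * B ^ j) := hcomm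
        _ = (A * A ^ i) * B ^ j := (mul_assoc _ _ _).symm
        _ = (A ^ i * A) * B ^ j := by
            rw [← zpow_one_add, ← zpow_add_one, add_comm]
        _ = A ^ i * (A * B ^ j) := mul_assoc _ _ _
    exact mul_left_cancel h1
  have hArj : A ^ (r ^ j) = A := by
    have h1 : B ^ j * A ^ (1 : ℤ) * (B ^ j)⁻¹ = A := by
      rw [zpow_one, hBjA, mul_assoc, mul_inv_cancel, mul_one]
    rw [hconj j 1, one_mul] at h1
    exact h1
  have hdvd : orderOf ((r : ZMod m)) ∣ j := by
    apply orderOf_dvd_of_pow_eq_one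
    have h1 : A ^ (r ^ j - 1) = 1 := by
      rw [sub_eq_add_neg, zpow_add, hArj, zpow_neg, zpow_one, mul_inv_cancel]
    have h2 := hφAk _ h1
    have h3 : ((r ^ j - 1 : ℤ) : ZMod m) = 0 :=
      (ZMod.intCast_zmod_eq_zero_iff_dvd _ m).mpr h2
    push_cast at h3
    linear_combination h3
  obtain ⟨q, rfl⟩ := hdvd
  rw [pow_mul]
  exact mul_mem (Subgroup.zpow_mem _ hA_H i) (pow_mem hBd_H q)
end

section
/- Let Γ be a finite group whose Sylow p-subgroups are cyclic for all primes p ≠ 3, and whose Sylow 3-subgroup P₃ is isomorphic to either Z/3 × Z/3 or Z/9 ⋊ Z/3. Suppose Γ = P₃ N for some normal subgroup N with P₃ ∩ N = {1}. Then Γ has a subgroup of index 3 all of whose Sylow subgroups are cyclic. -/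
/-!
In both cases P₃ is a semidirect product `C ⋊ Z/3` with `C` cyclic (for `Z/3 × Z/3` the action is
trivial), so P₃ has a cyclic subgroup `Q` of index 3. Since `N` is a normal complement of P₃,
`K = Q N` has index `[P₃ : Q] = 3` in Γ, and `[K : Q] = [Γ : P₃]` is prime to 3, so `Q` is a
cyclic Sylow 3-subgroup of `K`. The Sylow `p`-subgroups of `K` for `p ≠ 3` lie in those of Γ.
-/

open Subgroup

namespace Subgroup

variable {G : Type*} [Group G] {P Q K N : Subgroup G}

theorem relIndex_sup_eq_card_of_disjoint [N.Normal] (h : Disjoint Q N) :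
    N.relIndex (Q ⊔ N) = Nat.card Q := by
  rw [relIndex_sup_right, relIndex, subgroupOf_eq_bot.mpr h.symm, index_bot]

theorem exists_le_isCyclic_relIndex_eq {A : Type*} [Group A] (e : P ≃* A) (Q : Subgroup A)
    [IsCyclic Q] : ∃ Q' ≤ P, IsCyclic Q' ∧ Q'.relIndex P = Q.index := by
  set f : A →* G := P.subtype.comp e.symm.toMonoidHom
  have hf : Function.Injective f := P.subtype_injective.comp e.symm.injective
  have hrange : (⊤ : Subgroup A).map f = P := by
    rw [← MonoidHom.range_eq_map, MonoidHom.range_comp,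
      MonoidHom.range_eq_top.mpr e.symm.surjective, ← MonoidHom.range_eq_map, range_subtype]
  refine ⟨Q.map f, hrange ▸ map_mono le_top, (Q.equivMapOfInjective f hf).isCyclic.mp ‹_›, ?_⟩
  rw [← hrange, relIndex_map_map_of_injective _ _ hf, relIndex_top_right]

variable [Finite G]

theorem index_sup_eq_relIndex [N.Normal] (hsup : P ⊔ N = ⊤) (hinf : P ⊓ N = ⊥) (hQP : Q ≤ P) :
    (Q ⊔ N).index = Q.relIndex P := by
  have hdisj : Disjoint P N := disjoint_iff.mpr hinf
  refine Nat.eq_of_mul_eq_mul_left (Nat.card_pos (α := Q)) ?_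
  calc Nat.card Q * (Q ⊔ N).index = N.relIndex (Q ⊔ N) * (Q ⊔ N).index := by
        rw [relIndex_sup_eq_card_of_disjoint (hdisj.mono_left hQP)]
    _ = N.relIndex (P ⊔ N) := by rw [relIndex_mul_index le_sup_right, hsup, relIndex_top_right]
    _ = Nat.card P := relIndex_sup_eq_card_of_disjoint hdisj
    _ = Nat.card Q * Q.relIndex P := by
        rw [← relIndex_bot_left, ← relIndex_bot_left, relIndex_mul_relIndex _ _ _ bot_le hQP]

theorem relIndex_eq_index_of_index_eq_relIndex (hQP : Q ≤ P) (hQK : Q ≤ K)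
    (h : K.index = Q.relIndex P) : Q.relIndex K = P.index := by
  refine mul_right_cancel₀ K.index_ne_zero_of_finite ?_
  rw [relIndex_mul_index hQK, ← relIndex_mul_index hQP, h, mul_comm]

end Subgroup

namespace SemidirectProduct

variable {N H : Type*} [Group N] [Group H] {φ : H →* MulAut N}

theorem index_range_inl : (inl : N →* N ⋊[φ] H).range.index = Nat.card H := by
  rw [range_inl_eq_ker_rightHom, index_ker, MonoidHom.range_eq_top.mpr rightHom_surjective,
    card_top]

instance [IsCyclic N] : IsCyclic (inl : N →* N ⋊[φ] H).range :=
  isCyclic_of_surjective _ (inl : N →* N ⋊[φ] H).rangeRestrict_surjective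

end SemidirectProduct

section Sylow

variable {G : Type*} [Group G] {p : ℕ}

theorem Sylow.isCyclic_subgroup_of_forall_isCyclic (hG : ∀ P : Sylow p G, IsCyclic P)
    (K : Subgroup G) (R : Sylow p K) : IsCyclic R := by
  obtain ⟨P, hRP⟩ := (R.isPGroup'.map K.subtype).exists_le_sylow
  have := hG P
  have := isCyclic_of_le hRP
  exact ((R : Subgroup K).equivMapOfInjective K.subtype K.subtype_injective).isCyclic.mpr this

variable [Finite G] [Fact p.Prime]

theorem IsZGroup.of_isCyclic_sylow (P : Sylow p G) [IsCyclic P]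
    (hG : ∀ q : ℕ, q.Prime → q ≠ p → ∀ Q : Sylow q G, IsCyclic Q) : IsZGroup G := by
  refine ⟨fun q hq Q ↦ ?_⟩
  by_cases hqp : q = p
  · subst hqp
    exact (P.equiv Q).isCyclic.mp ‹_›
  · exact hG q hq hqp Q

theorem Sylow.isZGroup_sup_of_le (hG : ∀ q : ℕ, q.Prime → q ≠ p → ∀ Q : Sylow q G, IsCyclic Q)
    (P : Sylow p G) {N Q : Subgroup G} [N.Normal] (hsup : (P : Subgroup G) ⊔ N = ⊤)
    (hinf : (P : Subgroup G) ⊓ N = ⊥) (hQP : Q ≤ P) [IsCyclic Q] :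
    IsZGroup (Q ⊔ N : Subgroup G) := by
  set K := Q ⊔ N
  have hQK : Q ≤ K := le_sup_left
  have hpQ : IsPGroup p (Q.subgroupOf K) :=
    (P.isPGroup'.to_le hQP).of_equiv (subgroupOfEquivOfLe hQK).symm
  have hindex : (Q.subgroupOf K).index = P.index :=
    relIndex_eq_index_of_index_eq_relIndex hQP hQK (index_sup_eq_relIndex hsup hinf hQP)
  let S : Sylow p K := hpQ.toSylow (hindex ▸ P.not_dvd_index)
  have : IsCyclic S := (subgroupOfEquivOfLe hQK).isCyclic.mpr ‹_›
  exact IsZGroup.of_isCyclic_sylow S fun q hq hqp ↦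
    Sylow.isCyclic_subgroup_of_forall_isCyclic (hG q hq hqp) K

end Sylow

theorem index_three_subgroup_with_all_sylow_cyclic_general
    (Γ : Type) [Group Γ] [Fintype Γ]
    (hsyl : ∀ p : ℕ, p.Prime → p ≠ 3 → ∀ P : Sylow p Γ, IsCyclic P)
    (P₃ : Sylow 3 Γ)
    (hP₃ : Nonempty (P₃ ≃* Multiplicative (ZMod 3) × Multiplicative (ZMod 3)) ∨
      ∃ φ : Multiplicative (ZMod 3) →* MulAut (Multiplicative (ZMod 9)), φ ≠ 1 ∧
        Nonempty (P₃ ≃* Multiplicative (ZMod 9) ⋊[φ] Multiplicative (ZMod 3)))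
    (N : Subgroup Γ) (hN : N.Normal)
    (hsup : (P₃ : Subgroup Γ) ⊔ N = ⊤) (hinf : (P₃ : Subgroup Γ) ⊓ N = ⊥) :
    ∃ K : Subgroup Γ, K.index = 3 ∧
      ∀ p : ℕ, p.Prime → ∀ Q : Sylow p K, IsCyclic Q := by
  have : Fact (Nat.Prime 3) := ⟨Nat.prime_three⟩
  obtain ⟨Q, hQP, hQ, hQ3⟩ : ∃ Q ≤ (P₃ : Subgroup Γ), IsCyclic Q ∧ Q.relIndex P₃ = 3 := by
    rcases hP₃ with ⟨⟨e⟩⟩ | ⟨φ, -, ⟨e⟩⟩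
    · simpa [SemidirectProduct.index_range_inl] using exists_le_isCyclic_relIndex_eq
        (e.trans SemidirectProduct.mulEquivProd.symm) SemidirectProduct.inl.range
    · simpa [SemidirectProduct.index_range_inl] using exists_le_isCyclic_relIndex_eq e
        SemidirectProduct.inl.range
  exact ⟨Q ⊔ N, (index_sup_eq_relIndex hsup hinf hQP).trans hQ3,
    (Sylow.isZGroup_sup_of_le hsyl P₃ hsup hinf hQP).isZGroup⟩

theorem index_three_subgroup_with_all_sylow_cyclic
    (Γ : Type) [Group Γ] [Fintype Γ] (hodd : Odd (Fintype.card Γ))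
    (hsyl : ∀ p : ℕ, p.Prime → p ≠ 3 → ∀ P : Sylow p Γ, IsCyclic P)
    (P₃ : Sylow 3 Γ)
    (hP₃ : Nonempty (P₃ ≃* Multiplicative (ZMod 3) × Multiplicative (ZMod 3)) ∨
      ∃ φ : Multiplicative (ZMod 3) →* MulAut (Multiplicative (ZMod 9)), φ ≠ 1 ∧
        Nonempty (P₃ ≃* Multiplicative (ZMod 9) ⋊[φ] Multiplicative (ZMod 3)))
    (N : Subgroup Γ) (hN : N.Normal)
    (hsup : (P₃ : Subgroup Γ) ⊔ N = ⊤) (hinf : (P₃ : Subgroup Γ) ⊓ N = ⊥) :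
    ∃ K : Subgroup Γ, K.index = 3 ∧
      ∀ p : ℕ, p.Prime → ∀ Q : Sylow p K, IsCyclic Q :=
  index_three_subgroup_with_all_sylow_cyclic_general Γ hsyl P₃ hP₃ N hN hsup hinf
end

section
/- Let V be a 2-dimensional vector space over Q and let α : V → V be a linear map of finite odd order whose trace is an integer. Then tr(α) ∈ {-1, 2}. -/
open Polynomial

lemma monic_deg_two_eq {R : Type*} [CommRing R] {p : R[X]} (hm : p.Monic) (h : p.natDegree = 2) :
    p = X ^ 2 + C (p.coeff 1) * X + C (p.coeff 0) := by
  ext k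
  match k with
  | 0 => simp
  | 1 => simp [coeff_X_pow]
  | 2 => simpa [coeff_X_pow] using (by rw [← h]; exact hm.coeff_natDegree)
  | (k+3) =>
    rw [coeff_eq_zero_of_natDegree_lt (by omega)]
    simp [coeff_X_pow, coeff_C]

lemma odd_pow_eq_one {x : ℚ} {n : ℕ} (hn : Odd n) (h : x ^ n = 1) : x = 1 := by
  have hn0 : n ≠ 0 := by rintro rfl; simp [Nat.odd_iff] at hn
  have hx0 : 0 < x := by
    by_contra hx
    push_neg at hx
    have : x ^ n ≤ 0 := Odd.pow_nonpos hn hx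
    linarith
  rcases lt_trichotomy x 1 with h1 | h1 | h1
  · have := pow_lt_one₀ hx0.le h1 hn0
    linarith
  · exact h1
  · have := one_lt_pow₀ h1 hn0
    linarith

lemma real_nonneg_pow_eq_one {x : ℝ} {n : ℕ} (hn : n ≠ 0) (h0 : 0 ≤ x) (h : x ^ n = 1) : x = 1 := by
  rcases lt_trichotomy x 1 with h1 | h1 | h1
  · have := pow_lt_one₀ h0 h1 hn
    linarith
  · exact h1
  · have := one_lt_pow₀ h1 hn
    linarith

theorem trace_of_finite_odd_order_automorphism_of_rational_plane
    (V : Type) [AddCommGroup V] [Module ℚ V] (hdim : Module.finrank ℚ V = 2)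
    (α : V →ₗ[ℚ] V) (n : ℕ) (hn : Odd n) (hord : α ^ n = 1)
    (hint : ∃ z : ℤ, LinearMap.trace ℚ V α = (z : ℚ)) :
    LinearMap.trace ℚ V α = -1 ∨ LinearMap.trace ℚ V α = 2 := by
  have hfd : FiniteDimensional ℚ V := FiniteDimensional.of_finrank_eq_succ hdim
  have hVnt : Nontrivial V := by
    have : 0 < Module.finrank ℚ V := by omega
    exact Module.nontrivial_of_finrank_pos this
  have hn0 : n ≠ 0 := by rintro rfl; simp [Nat.odd_iff] at hn
  obtain ⟨z, hz⟩ := hint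
  have haeval : aeval α ((X : ℚ[X]) ^ n - 1) = 0 := by
    simp [hord]
  have hdvd : minpoly ℚ α ∣ (X : ℚ[X]) ^ n - 1 := minpoly.dvd ℚ α haeval
  set m := minpoly ℚ α with hmdef
  have hint' : IsIntegral ℚ α := LinearMap.isIntegral α
  have hmonic : m.Monic := minpoly.monic hint'
  have hdegpos : 0 < m.natDegree := minpoly.natDegree_pos hint'
  have hdvd2 : m ∣ α.charpoly := LinearMap.minpoly_dvd_charpoly α
  have hcdeg : α.charpoly.natDegree = 2 := by
    rw [LinearMap.charpoly_natDegree, hdim]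
  have hdegle : m.natDegree ≤ 2 := by
    have := Polynomial.natDegree_le_of_dvd hdvd2 (α.charpoly_monic).ne_zero
    omega
  interval_cases hd : m.natDegree
  · -- degree 1 : α is a rational scalar, necessarily 1, trace = 2
    right
    have hm1 : m = C (m.coeff 1) * X + C (m.coeff 0) :=
      eq_X_add_C_of_natDegree_le_one (by omega)
    have hc1 : m.coeff 1 = 1 := by
      have := hmonic.coeff_natDegree
      rwa [hd] at this
    have h0 : aeval α m = 0 := minpoly.aeval ℚ α
    rw [hm1, hc1] at h0
    have hα : α = (-m.coeff 0) • (1 : Module.End ℚ V) := by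
      simp only [map_add, map_mul, aeval_C, aeval_X, map_one, mul_one] at h0
      have : α + (m.coeff 0) • (1 : Module.End ℚ V) = 0 := by
        simpa [Algebra.algebraMap_eq_smul_one] using h0
      have := eq_neg_of_add_eq_zero_left this
      rw [this]; rw [neg_smul]
    set c : ℚ := -m.coeff 0 with hc
    have hcn : c ^ n = 1 := by
      obtain ⟨v, hv⟩ := exists_ne (0 : V)
      have hpow : (c ^ n) • (1 : Module.End ℚ V) = 1 := by
        rw [show (c ^ n) • (1 : Module.End ℚ V) = (c • 1) ^ n by
          rw [_root_.smul_pow, one_pow], ← hα, hord]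
      have := congrArg (fun f : Module.End ℚ V => f v) hpow
      simp only [LinearMap.smul_apply, Module.End.one_apply] at this
      have h' : (c ^ n - 1) • v = 0 := by rw [sub_smul, one_smul, this, sub_self]
      rcases smul_eq_zero.mp h' with h | h
      · linarith [sub_eq_zero.mp h]
      · exact absurd h hv
    have hc1' : c = 1 := odd_pow_eq_one hn hcn
    rw [hα, hc1', one_smul]
    rw [show (1 : Module.End ℚ V) = LinearMap.id by rfl]
    rw [LinearMap.trace_id, hdim]; norm_num
  · -- degree 2 : m = charpoly
    have hmeq : m = α.charpoly := by
      obtain ⟨q, hq⟩ := hdvd2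
      have hq0 : q ≠ 0 := by
        rintro rfl; rw [mul_zero] at hq; exact α.charpoly_monic.ne_zero hq
      have hdq : q.natDegree = 0 := by
        have := Polynomial.natDegree_mul hmonic.ne_zero hq0
        rw [← hq, hcdeg, hd] at this; omega
      obtain ⟨cq, rfl⟩ := Polynomial.natDegree_eq_zero.mp hdq
      have hlead : (1 : ℚ) = 1 * cq := by
        have := congrArg Polynomial.leadingCoeff hq
        rwa [α.charpoly_monic.leadingCoeff, Polynomial.leadingCoeff_mul,
          hmonic.leadingCoeff, leadingCoeff_C] at this
      have hcq : cq = 1 := by linarith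
      rw [hq, hcq, map_one, mul_one]
    -- trace = - coeff 1 of charpoly
    have htr : m.coeff 1 = -(z : ℚ) := by
      classical
      let b := Module.Free.chooseBasis ℚ V
      have hcard : Fintype.card (Module.Free.ChooseBasisIndex ℚ V) = 2 := by
        rw [← Module.finrank_eq_card_chooseBasisIndex, hdim]
      have h1 : LinearMap.trace ℚ V α = Matrix.trace (LinearMap.toMatrix b b α) := by
        rw [LinearMap.trace_eq_matrix_trace ℚ b]
      have hne : Nonempty (Module.Free.ChooseBasisIndex ℚ V) := by
        rw [← Fintype.card_pos_iff, hcard]; omega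
      have h2 := Matrix.trace_eq_neg_charpoly_coeff (LinearMap.toMatrix b b α)
      rw [hcard] at h2
      have h3 : α.charpoly = (LinearMap.toMatrix b b α).charpoly := LinearMap.charpoly_def α
      rw [hmeq, h3]
      rw [h1, h2] at hz
      linarith
    set b : ℚ := m.coeff 0 with hb
    have hm2 : m = X ^ 2 + C (-(z:ℚ)) * X + C b := by
      rw [← htr, hb]; exact monic_deg_two_eq hmonic hd
    -- move to ℂ
    obtain ⟨q, hq⟩ := hdvd
    have hqC := congrArg (Polynomial.map (algebraMap ℚ ℂ)) hq
    simp only [Polynomial.map_sub, Polynomial.map_pow, Polynomial.map_one, Polynomial.map_X,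
      Polynomial.map_mul, hm2, Polynomial.map_add, Polynomial.map_C] at hqC
    set M : ℂ[X] := X ^ 2 + C ((algebraMap ℚ ℂ) (-(z:ℚ))) * X + C ((algebraMap ℚ ℂ) b) with hM
    have hMdeg : M.degree = 2 := by
      rw [hM]; compute_degree!
    obtain ⟨lam, hlam⟩ := IsAlgClosed.exists_root M (by rw [hMdeg]; norm_num)
    have hlam' : lam ^ 2 - (z:ℂ) * lam + (b:ℂ) = 0 := by
      have := hlam
      simp only [hM, IsRoot.def, eval_add, eval_mul, eval_pow, eval_X, eval_C,
        eq_ratCast] at this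
      push_cast at this ⊢
      linear_combination this
    have hroot : ∀ x : ℂ, x ^ 2 - (z:ℂ) * x + (b:ℂ) = 0 → x ^ n = 1 := by
      intro x hx
      have := congrArg (Polynomial.eval x) hqC
      simp only [hM, eval_sub, eval_pow, eval_X, eval_one, eval_mul, eval_add, eval_C,
        eq_ratCast] at this
      have hMx : x ^ 2 + ((-(z:ℚ) : ℚ) : ℂ) * x + ((b : ℚ) : ℂ) = 0 := by
        push_cast
        linear_combination hx
      rw [hMx, zero_mul] at this
      exact sub_eq_zero.mp this
    have hlamn : lam ^ n = 1 := hroot lam hlam'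
    have hmun : ((z:ℂ) - lam) ^ n = 1 := hroot _ (by ring_nf; linear_combination hlam')
    have hprod : lam * ((z:ℂ) - lam) = (b:ℂ) := by linear_combination -hlam'
    have hbn : b ^ n = 1 := by
      have : ((b:ℚ):ℂ) ^ n = 1 := by
        rw [← hprod, mul_pow, hlamn, hmun, one_mul]
      exact_mod_cast this
    have hb1 : b = 1 := odd_pow_eq_one hn hbn
    rw [hb1] at hlam' hprod
    have hlam0 : lam ≠ 0 := by
      intro h; rw [h, zero_mul] at hprod; simp at hprod
    have habs : ‖lam‖ = 1 :=
      real_nonneg_pow_eq_one hn0 (norm_nonneg lam)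
        (by rw [← norm_pow, hlamn, norm_one])
    have hconj : (starRingEnd ℂ) lam = (z:ℂ) - lam := by
      have h1 : lam * (starRingEnd ℂ) lam = 1 := by
        rw [Complex.mul_conj]
        norm_cast
        rw [Complex.normSq_eq_norm_sq, habs]; norm_num
      rw [Rat.cast_one] at hprod
      have := h1.trans hprod.symm
      exact mul_left_cancel₀ hlam0 this
    have hre : (z:ℝ) = 2 * lam.re := by
      have h1 : lam + (starRingEnd ℂ) lam = (z:ℂ) := by rw [hconj]; ring
      have := congrArg Complex.re h1
      simp [Complex.add_re, Complex.conj_re] at this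
      linarith
    have hrele : |lam.re| ≤ 1 := by
      calc |lam.re| ≤ ‖lam‖ := Complex.abs_re_le_norm lam
        _ = 1 := habs
    have hzle : -2 ≤ z ∧ z ≤ 2 := by
      rw [abs_le] at hrele
      constructor <;> [exact_mod_cast (by linarith : (-2:ℝ) ≤ (z:ℝ));
        exact_mod_cast (by linarith : (z:ℝ) ≤ 2)]
    obtain ⟨hz1, hz2⟩ := hzle
    interval_cases z
    · -- z = -2 : lam = -1, contradiction with odd order
      exfalso
      have h2 : (lam + 1) ^ 2 = 0 := by push_cast at hlam'; linear_combination hlam'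
      have hl : lam = -1 := by
        have h0 : lam + 1 = 0 := pow_eq_zero_iff (n := 2) (by norm_num) |>.mp h2
        exact eq_neg_of_add_eq_zero_left h0
      rw [hl, Odd.neg_one_pow hn] at hlamn
      norm_num at hlamn
    · -- z = -1
      left; rw [hz]; norm_num
    · -- z = 0 : lam^2 = -1
      exfalso
      have h2 : lam ^ 2 = -1 := by push_cast at hlam'; linear_combination hlam'
      have : (1:ℂ) = -1 := by
        calc (1:ℂ) = (lam ^ n) ^ 2 := by rw [hlamn]; norm_num
          _ = (lam ^ 2) ^ n := by rw [← pow_mul, ← pow_mul, mul_comm]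
          _ = (-1) ^ n := by rw [h2]
          _ = -1 := Odd.neg_one_pow hn
      norm_num at this
    · -- z = 1 : lam^3 = -1
      exfalso
      have h3 : lam ^ 3 = -1 := by push_cast at hlam'; linear_combination (lam + 1) * hlam'
      have : (1:ℂ) = -1 := by
        calc (1:ℂ) = (lam ^ n) ^ 3 := by rw [hlamn]; norm_num
          _ = (lam ^ 3) ^ n := by rw [← pow_mul, ← pow_mul, mul_comm]
          _ = (-1) ^ n := by rw [h3]
          _ = -1 := Odd.neg_one_pow hn
      norm_num at this
    · -- z = 2 : m = (X-1)^2 divides the squarefree X^n - 1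
      exfalso
      have hmsq : m = (X - 1) ^ 2 := by
        rw [hm2, hb1]
        have e1 : (C (-((2:ℤ):ℚ)) : ℚ[X]) = -2 := by push_cast; norm_num [Polynomial.C_eq_natCast, map_ofNat]
        rw [e1, map_one]
        ring
      have hsf : Squarefree ((X:ℚ[X]) ^ n - 1) := by
        have hsep := (Polynomial.separable_X_pow_sub_C (1:ℚ)
          (Nat.cast_ne_zero.mpr hn0) one_ne_zero).squarefree
        simpa using hsep
      have hdd : (X - 1) * (X - 1) ∣ ((X:ℚ[X]) ^ n - 1) := by
        refine ⟨q, ?_⟩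
        rw [hq, hmsq]; ring
      have := hsf (X - 1) hdd
      have hnu : ¬ IsUnit ((X:ℚ[X]) - 1) := by
        simpa using Polynomial.not_isUnit_X_sub_C (1:ℚ)
      exact hnu this
end
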